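/- arXiv:2402.03132 — 3 statements merged into one kernel-verified Lean document; each statement's English description precedes it below -/
import Mathlib

section
/- Let (M,d) be a compact metric space and let φ be an expansive (k*-expansive) flow on M. Then the set of singularities of φ, i.e. the set {σ ∈ M : φ(t,σ) = σ for all t ∈ ℝ}, is finite. -/
/-- `Rep`: increasing homeomorphisms `h : ℝ → ℝ` with `h 0 = 0`.  (A strictly monotone
bijection of `ℝ` is automatically a homeomorphism.) -/
def IsRep (h : ℝ → ℝ) : Prop :=
  StrictMono h ∧ Function.Bijective h ∧ h 0 = 0

/-- A flow `φ` on a metric space is expansive (`k*`-expansive) if for every `ε > 0` there is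
`δ > 0` such that whenever `x, y` and `h ∈ Rep` satisfy `d(φ t x, φ (h t) y) ≤ δ` for all
`t ∈ ℝ`, there is `t₀ ∈ ℝ` with `φ (h t₀) y ∈ φ_{[t₀ - ε, t₀ + ε]}(x)`. -/
def IsExpansiveFlow {M : Type*} [MetricSpace M] (φ : Flow ℝ M) : Prop :=
  ∀ ε > (0 : ℝ), ∃ δ > (0 : ℝ), ∀ (x y : M) (h : ℝ → ℝ), IsRep h →
    (∀ t : ℝ, dist (φ t x) (φ (h t) y) ≤ δ) →
    ∃ t₀ : ℝ, φ (h t₀) y ∈ (fun t : ℝ => φ t x) '' Set.Icc (t₀ - ε) (t₀ + ε)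

/-!
Expansiveness tested with the identity reparametrization shows that two singularities at
distance at most `δ` are equal: their orbits are single points, so the expansiveness
conclusion says one lies on the orbit of the other. A `δ`-separated subset of a compact
metric space is finite, since each ball of a finite cover by `δ / 2`-balls contains at most
one of its points.
-/

open Metric

theorem isRep_id : IsRep id :=
  ⟨strictMono_id, Function.bijective_id, rfl⟩

theorem TotallyBounded.finite_of_forall_dist_le_imp_eq {X : Type*} [PseudoMetricSpace X]
    {s : Set X} (hs : TotallyBounded s) {δ : ℝ} (hδ : 0 < δ)
    (hsep : ∀ x ∈ s, ∀ y ∈ s, dist x y ≤ δ → x = y) : s.Finite := by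
  obtain ⟨t, ht, hcover⟩ := totallyBounded_iff.1 hs (δ / 2) (half_pos hδ)
  have hball : ∀ c ∈ t, (s ∩ ball c (δ / 2)).Finite := fun c _ =>
    Set.Subsingleton.finite fun x ⟨hxs, hxc⟩ y ⟨hys, hyc⟩ => by
      refine hsep x hxs y hys ?_
      rw [mem_ball] at hxc hyc
      linarith [dist_triangle_right x y c]
  refine (ht.biUnion hball).subset fun x hx => ?_
  obtain ⟨c, hc, hxc⟩ := Set.mem_iUnion₂.1 (hcover hx)
  exact Set.mem_biUnion hc ⟨hx, hxc⟩

theorem IsExpansiveFlow.exists_pos_eq_of_fixed_of_dist_le {M : Type*} [MetricSpace M]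
    {φ : Flow ℝ M} (hexp : IsExpansiveFlow φ) :
    ∃ δ > 0, ∀ x y : M, (∀ t, φ t x = x) → (∀ t, φ t y = y) → dist x y ≤ δ → x = y := by
  obtain ⟨δ, hδ, hkey⟩ := hexp 1 one_pos
  refine ⟨δ, hδ, fun x y hx hy hxy => ?_⟩
  obtain ⟨t₀, s, -, hs⟩ := hkey x y id isRep_id fun t => by rwa [id, hx, hy]
  simpa only [hx, hy] using hs

/-- If `φ` is an expansive flow on a compact metric space `M`, then the set of
singularities of `φ` is finite. -/
theorem singularities_finite_of_expansiveFlow {M : Type*} [MetricSpace M] [CompactSpace M]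
    (φ : Flow ℝ M) (hexp : IsExpansiveFlow φ) :
    {σ : M | ∀ t : ℝ, φ t σ = σ}.Finite := by
  obtain ⟨δ, hδ, hsep⟩ := hexp.exists_pos_eq_of_fixed_of_dist_le
  exact (isCompact_univ.totallyBounded.subset (Set.subset_univ _)).finite_of_forall_dist_le_imp_eq
    hδ fun x hx y hy => hsep x y hx hy
end

section
/- Let Σ = {0,1}^ℤ be the full shift on two symbols with shift map σ. There exists an uncountable family of pairwise disjoint minimal sets for σ, each of which has positive topological entropy. (More precisely, there is a family {Λ_c}_{c ∈ (0, log 2)} of pairwise disjoint minimal sets for σ with h(σ, Λ_c) = c for each c.) -/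
open Dynamics

/-- Topological entropy of `T` on the subset `F`, defined through maximal cardinalities of
`(n, U)`-separated sets (dynamical nets): `h(T, F) = ⨆ U ∈ 𝓤 X, netEntropyEntourage T F U`.
This is the usual entropy `lim_{ε → 0} limsup_n (1/n) log S(n, ε, F)` via separated sets. -/
noncomputable def netEntropy {X : Type*} [UniformSpace X] (T : X → X) (F : Set X) : EReal :=
  ⨆ U ∈ uniformity X, netEntropyEntourage T F U

/-- `Λ` is a minimal set for `f`: nonempty, compact, invariant (`f '' Λ = Λ`) and with no
nonempty proper compact invariant subset. -/
def IsMinimalSet {X : Type*} [TopologicalSpace X] (f : X → X) (Λ : Set X) : Prop :=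
  Λ.Nonempty ∧ IsCompact Λ ∧ f '' Λ = Λ ∧
    ∀ Λ' ⊆ Λ, Λ'.Nonempty → IsCompact Λ' → f '' Λ' = Λ' → Λ' = Λ

/-- The shift map on the full two-sided shift on two symbols `Σ = {0,1}^ℤ`. -/
def shiftMap : (ℤ → Bool) → (ℤ → Bool) := fun x n => x (n + 1)

namespace Grillen

open List Filter Set Uniformity UniformSpace ENNReal

noncomputable local instance : DecidableEq (ℤ → Bool) := Classical.decEq _

/-! ### List helpers -/

/-- If `s ++ w ++ e = u ++ v ++ r` with `|s| ≤ |u|` and `|u| + |v| ≤ |s| + |w|`,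
then `v` is an infix of `w`. -/
lemma segment_infix {s w e u v r : List Bool}
    (h : s ++ (w ++ e) = u ++ (v ++ r)) (h1 : s.length ≤ u.length)
    (h2 : u.length + v.length ≤ s.length + w.length) : v <:+: w := by
  have hs : (s ++ (w ++ e)).drop s.length = w ++ e := by
    rw [List.drop_append_of_le_length le_rfl]; simp
  have hu : (s ++ (w ++ e)).drop u.length = v ++ r := by
    rw [h, List.drop_append_of_le_length le_rfl]; simp
  have hd : (w ++ e).drop (u.length - s.length) = v ++ r := by
    have h3 := List.drop_drop (i := u.length - s.length) (j := s.length) (l := s ++ (w ++ e))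
    rw [hs, show s.length + (u.length - s.length) = u.length by omega, hu] at h3
    exact h3
  have hv : v = ((w ++ e).drop (u.length - s.length)).take v.length := by
    rw [hd]; exact (List.take_left (l₁ := v) (l₂ := r)).symm
  rw [List.drop_append_of_le_length (by omega),
    List.take_append_of_le_length (by rw [List.length_drop]; omega)] at hv
  rw [hv]
  exact ((List.take_prefix v.length (w.drop (u.length - s.length))).isInfix).trans
    (List.drop_suffix _ _).isInfix

lemma prefix_drop_take {xs ys : List Bool} (h : xs <+: ys) {r l : ℕ}
    (hrl : r + l ≤ xs.length) : (xs.drop r).take l = (ys.drop r).take l := by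
  obtain ⟨e, rfl⟩ := h
  rw [List.drop_append_of_le_length (by omega),
    List.take_append_of_le_length (by rw [List.length_drop]; omega)]

lemma flatten_length {L : ℕ} : ∀ {bs : List (List Bool)}, (∀ b ∈ bs, b.length = L) →
    bs.flatten.length = bs.length * L := by
  intro bs
  induction bs with
  | nil => simp
  | cons b t ih =>
      intro h
      simp only [List.flatten_cons, List.length_append, List.length_cons,
        ih (fun x hx => h x (List.mem_cons_of_mem _ hx)), h b (List.mem_cons_self)]
      ring

lemma flatten_drop {L : ℕ} : ∀ (t : ℕ) (bs : List (List Bool)), (∀ b ∈ bs, b.length = L) →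
    bs.flatten.drop (t * L) = (bs.drop t).flatten := by
  intro t
  induction t with
  | zero => simp
  | succ t ih =>
      intro bs h
      cases bs with
      | nil => simp
      | cons b tl =>
          have hb : b.length = L := h b (List.mem_cons_self)
          have harith : (t + 1) * L = b.length + t * L := by rw [hb]; ring
          rw [List.flatten_cons, harith, ← List.drop_drop, List.drop_left,
            ih tl (fun x hx => h x (List.mem_cons_of_mem _ hx))]
          simp

/-- An infix of length `≥ 2L` of a concatenation of blocks of length `L` contains a
complete block. -/
lemma block_in_window {L : ℕ} (hL : 0 < L) :
    ∀ (bs : List (List Bool)), (∀ b ∈ bs, b.length = L) →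
    ∀ w, w <:+: bs.flatten → 2 * L ≤ w.length → ∃ b ∈ bs, b <:+: w := by
  intro bs
  induction bs with
  | nil =>
      intro _ w hw hlen
      have hw0 := hw.length_le
      simp only [List.flatten_nil, List.length_nil, Nat.le_zero] at hw0
      omega
  | cons b t ih =>
      intro hlen w hw h2L
      have hb : b.length = L := hlen b (List.mem_cons_self)
      obtain ⟨s, e, hse⟩ := hw
      rw [List.flatten_cons, List.append_assoc] at hse
      rcases le_or_gt L s.length with hs | hs
      · have hwt : w <:+: t.flatten := by
          refine ⟨s.drop b.length, e, ?_⟩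
          have := congrArg (List.drop b.length) hse
          rw [List.drop_left] at this
          rw [← this, List.drop_append_of_le_length (by omega), List.append_assoc]
        obtain ⟨b', hb', hinf⟩ := ih (fun x hx => hlen x (List.mem_cons_of_mem _ hx)) w hwt h2L
        exact ⟨b', List.mem_cons_of_mem _ hb', hinf⟩
      · have htne : t ≠ [] := by
          intro h0
          subst h0
          have := congrArg List.length hse
          simp at this
          omega
        obtain ⟨b1, t', rfl⟩ := List.exists_cons_of_ne_nil htne
        have hb1 : b1.length = L := hlen b1 (List.mem_cons_of_mem _ (List.mem_cons_self))
        have hinf : b1 <:+: w := by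
          apply segment_infix (s := s) (w := w) (e := e) (u := b) (v := b1) (r := t'.flatten)
          · rw [hse, List.flatten_cons]
          · omega
          · omega
        exact ⟨b1, List.mem_cons_of_mem _ (List.mem_cons_self), hinf⟩

lemma flatten_injOn {L : ℕ} (hL : 0 < L) :
    ∀ (bs cs : List (List Bool)), (∀ b ∈ bs, b.length = L) → (∀ b ∈ cs, b.length = L) →
    bs.flatten = cs.flatten → bs.length = cs.length → bs = cs := by
  intro bs
  induction bs with
  | nil => intro cs _ _ _ h; cases cs with | nil => rfl | cons c t => simp at h
  | cons b t ih =>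
      intro cs hb hc hf hlen
      cases cs with
      | nil => simp at hlen
      | cons c t' =>
          have hbl : b.length = L := hb b (List.mem_cons_self)
          have hcl : c.length = L := hc c (List.mem_cons_self)
          simp only [List.flatten_cons] at hf
          obtain ⟨hbc, hft⟩ := List.append_inj hf (by omega)
          subst hbc
          have := ih t' (fun x hx => hb x (List.mem_cons_of_mem _ hx))
            (fun x hx => hc x (List.mem_cons_of_mem _ hx)) hft (by simpa using hlen)
          rw [this]

/-! ### The numerical recursion -/

noncomputable def nt (c : ℝ) (s L : ℕ) : ℕ :=
  max (⌊(s * Real.log s) / (Real.log s - c * L)⌋₊ + 1) (s + 2)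

noncomputable def SL (c : ℝ) : ℕ → ℕ × ℕ
  | 0 => (2, 1)
  | k+1 => ((SL c k).1 ^ (nt c (SL c k).1 (SL c k).2 - (SL c k).1),
      nt c (SL c k).1 (SL c k).2 * (SL c k).2)

noncomputable def sk (c : ℝ) (k : ℕ) : ℕ := (SL c k).1
noncomputable def Lk (c : ℝ) (k : ℕ) : ℕ := (SL c k).2

lemma sk_zero (c : ℝ) : sk c 0 = 2 := rfl
lemma Lk_zero (c : ℝ) : Lk c 0 = 1 := rfl
lemma sk_succ (c : ℝ) (k : ℕ) :
    sk c (k+1) = sk c k ^ (nt c (sk c k) (Lk c k) - sk c k) := rfl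
lemma Lk_succ (c : ℝ) (k : ℕ) :
    Lk c (k+1) = nt c (sk c k) (Lk c k) * Lk c k := rfl

variable {c : ℝ}

lemma nt_ge (c : ℝ) (s L : ℕ) : s + 2 ≤ nt c s L := le_max_right _ _

/-- The basic invariant of the recursion. -/
lemma invariant (hc : 0 < c) (hc2 : c < Real.log 2) (k : ℕ) :
    2 ≤ sk c k ∧ 1 ≤ Lk c k ∧ c * Lk c k < Real.log (sk c k) := by
  induction k with
  | zero =>
      refine ⟨le_refl 2, le_refl 1, ?_⟩
      rw [sk_zero, Lk_zero]
      push_cast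
      simpa using hc2
  | succ k ih =>
      obtain ⟨hs, hL, hlog⟩ := ih
      set s := sk c k with hs_def
      set L := Lk c k with hL_def
      set n := nt c s L with hn_def
      have hlogs : 0 < Real.log s := Real.log_pos (by exact_mod_cast hs)
      have hdpos : 0 < Real.log s - c * L := by linarith
      have hXnn : 0 ≤ (s * Real.log s) / (Real.log s - c * L) := by positivity
      have hnX : (s * Real.log s) / (Real.log s - c * L) < n := by
        calc (s * Real.log s) / (Real.log s - c * L)
            < (⌊(s * Real.log s) / (Real.log s - c * L)⌋₊ + 1 : ℕ) := by
              push_cast; exact Nat.lt_floor_add_one _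
          _ ≤ (n : ℝ) := by exact_mod_cast Nat.cast_le.2 (le_max_left _ _)
      have hns : s + 2 ≤ n := nt_ge c s L
      have hkey : c * (n * L) < (n - s : ℕ) * Real.log s := by
        have h1 : (s : ℝ) * Real.log s < n * (Real.log s - c * L) := by
          rw [div_lt_iff₀ hdpos] at hnX
          linarith
        have h2 : ((n - s : ℕ) : ℝ) = (n : ℝ) - s := by
          have : s ≤ n := by omega
          push_cast [this]; ring
        rw [h2]
        nlinarith
      refine ⟨?_, ?_, ?_⟩
      · rw [sk_succ]
        calc 2 = 2 ^ 1 := rfl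
          _ ≤ s ^ 1 := by simpa using hs
          _ ≤ s ^ (n - s) := Nat.pow_le_pow_right (by omega) (by omega)
      · rw [Lk_succ]
        have : 1 * 1 ≤ n * L := Nat.mul_le_mul (by omega) hL
        simpa using this
      · rw [sk_succ, Lk_succ]
        push_cast
        rw [Real.log_pow]
        push_cast at hkey
        convert hkey using 2 <;> push_cast <;> ring

lemma sk_two (hc : 0 < c) (hc2 : c < Real.log 2) (k : ℕ) : 2 ≤ sk c k :=
  (invariant hc hc2 k).1

lemma Lk_pos (hc : 0 < c) (hc2 : c < Real.log 2) (k : ℕ) : 0 < Lk c k :=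
  (invariant hc hc2 k).2.1

lemma hk_gt (hc : 0 < c) (hc2 : c < Real.log 2) (k : ℕ) :
    c < Real.log (sk c k) / Lk c k := by
  obtain ⟨hs, hL, hlog⟩ := invariant hc hc2 k
  rw [lt_div_iff₀ (by exact_mod_cast hL)]
  linarith

lemma Lk_lt_succ (hc : 0 < c) (hc2 : c < Real.log 2) (k : ℕ) :
    Lk c k < Lk c (k + 1) := by
  rw [Lk_succ]
  have hL := Lk_pos hc hc2 k
  have hn : sk c k + 2 ≤ nt c (sk c k) (Lk c k) := nt_ge _ _ _
  have hs := sk_two hc hc2 k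
  calc Lk c k = 1 * Lk c k := (one_mul _).symm
    _ < nt c (sk c k) (Lk c k) * Lk c k := (Nat.mul_lt_mul_right hL).2 (by omega)

lemma Lk_ge (hc : 0 < c) (hc2 : c < Real.log 2) (k : ℕ) : k + 1 ≤ Lk c k := by
  induction k with
  | zero => simp [Lk_zero]
  | succ k ih => have := Lk_lt_succ hc hc2 k; omega

lemma Lk_mono (hc : 0 < c) (hc2 : c < Real.log 2) {k m : ℕ} (h : k ≤ m) :
    Lk c k ≤ Lk c m :=
  monotone_nat_of_le_succ (fun j => (Lk_lt_succ hc hc2 j).le) h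

/-- The key quantitative estimate of the recursion. -/
lemma sk_ge (hc : 0 < c) (hc2 : c < Real.log 2) (k : ℕ) : k + 2 ≤ sk c k := by
  induction k with
  | zero => simp [sk_zero]
  | succ k ih =>
      rw [sk_succ]
      have hs := sk_two hc hc2 k
      have hn : sk c k + 2 ≤ nt c (sk c k) (Lk c k) := nt_ge _ _ _
      calc k + 1 + 2 ≤ sk c k + 1 := by omega
        _ ≤ sk c k * sk c k := by nlinarith
        _ = sk c k ^ 2 := (sq (sk c k)).symm
        _ ≤ sk c k ^ (nt c (sk c k) (Lk c k) - sk c k) :=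
            Nat.pow_le_pow_right (by omega) (by omega)

/-- The one-step contraction estimate. -/
lemma dk_step (hc : 0 < c) (hc2 : c < Real.log 2) (k : ℕ) :
    Real.log (sk c (k+1)) / Lk c (k+1) - c ≤
      2 * (Real.log (sk c k) / Lk c k - c) ^ 2 /
        (sk c k * (Real.log (sk c k) / Lk c k)) := by
  obtain ⟨hs, hL, hlog⟩ := invariant hc hc2 k
  set s := sk c k with hs_def
  set L := Lk c k with hL_def
  set n := nt c s L with hn_def
  set h := Real.log s / L with hh_def
  set d := h - c with hd_def
  have hLpos : (0:ℝ) < L := by exact_mod_cast hL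
  have hspos : (0:ℝ) < s := by positivity
  have hlogs : 0 < Real.log s := Real.log_pos (by exact_mod_cast hs)
  have hhpos : 0 < h := by positivity
  have hdpos : 0 < d := by
    have h1 := hk_gt hc hc2 k
    rw [hd_def]
    linarith [h1]
  have hns : s + 2 ≤ n := nt_ge c s L
  have hnpos : (0:ℝ) < n := by
    have : 0 < n := by omega
    exact_mod_cast this
  -- `n ≤ s*h/d + 2`
  have hXeq : (s * Real.log s) / (Real.log s - c * L) = s * h / d := by
    rw [hd_def, hh_def]
    rw [div_eq_div_iff (by linarith) (by rw [hh_def] at *; positivity)]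
    field_simp
  have hden : 0 < Real.log s - c * L := by linarith
  have hn_le : (n : ℝ) ≤ s * h / d + 2 := by
    have h1 : ((⌊(s * Real.log s) / (Real.log s - c * L)⌋₊ + 1 : ℕ) : ℝ)
        ≤ s * h / d + 2 := by
      have hfl := Nat.floor_le (by positivity :
        (0:ℝ) ≤ (s * Real.log s) / (Real.log s - c * L))
      push_cast
      rw [← hXeq]
      linarith
    have h2 : ((s + 2 : ℕ) : ℝ) ≤ s * h / d + 2 := by
      push_cast
      have : (s : ℝ) ≤ s * h / d := by
        rw [le_div_iff₀ hdpos]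
        have : c * s ≥ 0 := by positivity
        nlinarith
      linarith
    have : (n : ℝ) = max ((⌊(s * Real.log s) / (Real.log s - c * L)⌋₊ + 1 : ℕ) : ℝ)
        ((s + 2 : ℕ) : ℝ) := by
      rw [hn_def, nt]
      exact_mod_cast Nat.cast_max ..
    rw [this]
    exact max_le h1 h2
  -- `h' = h - s*h/n`
  have hsn : s ≤ n := by omega
  have hh' : Real.log (sk c (k+1)) / Lk c (k+1) = h - s * h / n := by
    rw [sk_succ, Lk_succ, ← hs_def, ← hL_def, ← hn_def]
    push_cast
    rw [Real.log_pow, hh_def]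
    have hcast : ((n - s : ℕ) : ℝ) = (n : ℝ) - s := by push_cast [hsn]; ring
    rw [hcast]
    field_simp
  rw [hh']
  -- now the algebra
  have hnle' : (n : ℝ) ≤ (s * h + 2 * d) / d := by
    have heq : (s * h + 2 * d) / d = s * h / d + 2 := by field_simp
    rw [heq]
    exact hn_le
  have hfrac : s * h * d / (s * h + 2 * d) ≤ s * h / n := by
    have hpos2 : (0:ℝ) < s * h + 2 * d := by positivity
    rw [div_le_div_iff₀ hpos2 hnpos]
    have h1 : s * h * d * (n : ℝ) ≤ s * h * d * (s * h / d + 2) :=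
      mul_le_mul_of_nonneg_left hn_le (by positivity)
    have h2 : s * h * d * ((s:ℝ) * h / d + 2) = s * h * (s * h + 2 * d) := by
      field_simp
    exact le_trans h1 (le_of_eq h2)
  have key : h - s * h / n - c ≤ 2 * d ^ 2 / (s * h + 2 * d) := by
    have : d - s * h * d / (s * h + 2 * d) = 2 * d ^ 2 / (s * h + 2 * d) := by
      field_simp
      ring
    have h2 : h - s * h / n - c ≤ d - s * h * d / (s * h + 2 * d) := by
      simp only [hd_def]
      linarith [hfrac]
    linarith [h2, this.le]
  calc h - s * h / n - c ≤ 2 * d ^ 2 / (s * h + 2 * d) := key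
    _ ≤ 2 * d ^ 2 / (s * h) := by
        apply div_le_div_of_nonneg_left (by positivity) (by positivity)
        linarith
    _ = 2 * (h - c) ^ 2 / (s * h) := by rw [hd_def]

lemma dk_nonneg (hc : 0 < c) (hc2 : c < Real.log 2) (k : ℕ) :
    0 ≤ Real.log (sk c k) / Lk c k - c := by
  have := hk_gt hc hc2 k
  linarith

lemma dk_le_d0 (hc : 0 < c) (hc2 : c < Real.log 2) (k : ℕ) :
    Real.log (sk c k) / Lk c k - c ≤ Real.log 2 - c := by
  induction k with
  | zero => simp [sk_zero, Lk_zero]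
  | succ k ih =>
      have hstep := dk_step hc hc2 k
      have hd := dk_nonneg hc hc2 k
      obtain ⟨hs, hL, hlog⟩ := invariant hc hc2 k
      have hLpos : (0:ℝ) < Lk c k := by exact_mod_cast hL
      have hlogs : 0 < Real.log (sk c k) := Real.log_pos (by exact_mod_cast hs)
      have hhpos : (0:ℝ) < Real.log (sk c k) / Lk c k := by positivity
      have hspos : (0:ℝ) < sk c k := by positivity
      have hd0 : 0 < Real.log 2 - c := by linarith
      -- 2 d^2/(s h) ≤ d since 2 d ≤ s h : s ≥ 2, h > c... need 2d ≤ sh: d ≤ h ... d = h - c ≤ h, s ≥ 2: sh ≥ 2h ≥ 2d ✓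
      have h2d : 2 * (Real.log (sk c k) / Lk c k - c) ≤
          (sk c k : ℝ) * (Real.log (sk c k) / Lk c k) := by
        have hs2 : (2:ℝ) ≤ sk c k := by exact_mod_cast hs
        nlinarith
      have : 2 * (Real.log (sk c k) / Lk c k - c) ^ 2 /
          ((sk c k : ℝ) * (Real.log (sk c k) / Lk c k)) ≤
          Real.log (sk c k) / Lk c k - c := by
        rw [div_le_iff₀ (by positivity)]
        nlinarith
      linarith

lemma hk_tendsto (hc : 0 < c) (hc2 : c < Real.log 2) :
    Tendsto (fun k => Real.log (sk c k) / Lk c k) atTop (nhds c) := by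
  set D := 2 * (Real.log 2 - c) ^ 2 / c with hD
  have hDpos : 0 ≤ D := by
    have : 0 < Real.log 2 - c ∨ 0 = Real.log 2 - c := by left; linarith
    positivity
  have hbound : ∀ k : ℕ, 1 ≤ k →
      Real.log (sk c k) / Lk c k - c ≤ D / k := by
    intro k hk
    obtain ⟨j, rfl⟩ : ∃ j, k = j + 1 := ⟨k - 1, by omega⟩
    have hstep := dk_step hc hc2 j
    obtain ⟨hs, hL, hlog⟩ := invariant hc hc2 j
    have hLpos : (0:ℝ) < Lk c j := by exact_mod_cast hL
    have hlogs : 0 < Real.log (sk c j) := Real.log_pos (by exact_mod_cast hs)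
    have hhpos : (0:ℝ) < Real.log (sk c j) / Lk c j := by positivity
    have hhc : c ≤ Real.log (sk c j) / Lk c j := (hk_gt hc hc2 j).le
    have hd0 := dk_le_d0 hc hc2 j
    have hdnn := dk_nonneg hc hc2 j
    have hsge : (j + 2 : ℝ) ≤ sk c j := by exact_mod_cast sk_ge hc hc2 j
    have hspos : (0:ℝ) < sk c j := by linarith [hsge]; 
    calc Real.log (sk c (j+1)) / Lk c (j+1) - c
        ≤ 2 * (Real.log (sk c j) / Lk c j - c) ^ 2 /
          ((sk c j : ℝ) * (Real.log (sk c j) / Lk c j)) := hstep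
      _ ≤ 2 * (Real.log 2 - c) ^ 2 / ((j + 1 : ℝ) * c) := by
          apply div_le_div₀ (by positivity) (by nlinarith [hd0, hdnn]) (by positivity)
            (by nlinarith [hsge, hhc, hc.le, hhpos])
      _ = D / (j + 1 : ℝ) := by rw [hD, div_div]; ring
      _ = D / ((j + 1 : ℕ) : ℝ) := by push_cast; ring_nf
  have hten : Tendsto (fun k : ℕ => Real.log (sk c k) / Lk c k - c) atTop (nhds 0) := by
    apply squeeze_zero' (Eventually.of_forall fun k => dk_nonneg hc hc2 k)
      (eventually_atTop.2 ⟨1, fun k hk => hbound k hk⟩)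
      (tendsto_const_div_atTop_nhds_zero_nat D)
  have := hten.add_const c
  simpa using this

/-! ### The blocks -/

noncomputable def Bk (c : ℝ) : ℕ → Finset (List Bool)
  | 0 => {[false], [true]}
  | k+1 =>
      Finset.image
        (fun g : Fin (nt c (sk c k) (Lk c k) - sk c k) → {b // b ∈ Bk c k} =>
          (Bk c k).toList.flatten ++ (List.ofFn fun i => (g i).1).flatten)
        Finset.univ

lemma Bk_succ_def (c : ℝ) (k : ℕ) :
    Bk c (k+1) = Finset.image
      (fun g : Fin (nt c (sk c k) (Lk c k) - sk c k) → {b // b ∈ Bk c k} =>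
        (Bk c k).toList.flatten ++ (List.ofFn fun i => (g i).1).flatten)
      Finset.univ := rfl

lemma mem_Bk_succ {k : ℕ} {v : List Bool} :
    v ∈ Bk c (k+1) ↔ ∃ g : Fin (nt c (sk c k) (Lk c k) - sk c k) → {b // b ∈ Bk c k},
      v = (Bk c k).toList.flatten ++ (List.ofFn fun i => (g i).1).flatten := by
  rw [Bk_succ_def, Finset.mem_image]
  constructor
  · rintro ⟨g, -, rfl⟩; exact ⟨g, rfl⟩
  · rintro ⟨g, rfl⟩; exact ⟨g, Finset.mem_univ g, rfl⟩

lemma Bk_length_card (hc : 0 < c) (hc2 : c < Real.log 2) :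
    ∀ k, (∀ b ∈ Bk c k, b.length = Lk c k) ∧ (Bk c k).card = sk c k := by
  intro k
  induction k with
  | zero =>
      constructor
      · intro b hb
        have : b = [false] ∨ b = [true] := by
          have : b ∈ ({[false], [true]} : Finset (List Bool)) := hb
          simpa using this
        rcases this with rfl | rfl <;> simp [Lk_zero]
      · rfl
  | succ k ih =>
      obtain ⟨ihlen, ihcard⟩ := ih
      have hL := Lk_pos hc hc2 k
      have hs := sk_two hc hc2 k
      have hns := nt_ge c (sk c k) (Lk c k)
      have htl : ∀ b ∈ (Bk c k).toList, b.length = Lk c k :=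
        fun b hb => ihlen b (Finset.mem_toList.1 hb)
      have hEl : (Bk c k).toList.flatten.length = sk c k * Lk c k := by
        rw [flatten_length htl, Finset.length_toList, ihcard]
      have hflen : ∀ g : Fin (nt c (sk c k) (Lk c k) - sk c k) → {b // b ∈ Bk c k},
          (List.ofFn fun i => (g i).1).flatten.length
            = (nt c (sk c k) (Lk c k) - sk c k) * Lk c k := by
        intro g
        rw [flatten_length (fun x hx => ?_), List.length_ofFn]
        obtain ⟨i, rfl⟩ := List.mem_ofFn.1 hx
        exact ihlen _ (g i).2
      constructor
      · intro b hb
        obtain ⟨g, rfl⟩ := mem_Bk_succ.1 hb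
        rw [List.length_append, hEl, hflen g, Lk_succ]
        have hsn : sk c k ≤ nt c (sk c k) (Lk c k) := by omega
        rw [← Nat.add_mul, Nat.add_sub_cancel' hsn]
      · have hinj : Function.Injective
            (fun g : Fin (nt c (sk c k) (Lk c k) - sk c k) → {b // b ∈ Bk c k} =>
              (Bk c k).toList.flatten ++ (List.ofFn fun i => (g i).1).flatten) := by
          intro g g' hgg
          simp only [List.append_cancel_left_eq] at hgg
          have hlen1 : ∀ x ∈ (List.ofFn fun i => (g i).1), x.length = Lk c k := by
            intro x hx; obtain ⟨i, rfl⟩ := List.mem_ofFn.1 hx; exact ihlen _ (g i).2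
          have hlen2 : ∀ x ∈ (List.ofFn fun i => (g' i).1), x.length = Lk c k := by
            intro x hx; obtain ⟨i, rfl⟩ := List.mem_ofFn.1 hx; exact ihlen _ (g' i).2
          have h2 := flatten_injOn hL _ _ hlen1 hlen2 hgg (by simp)
          funext i
          have := congrFun (List.ofFn_inj.1 h2) i
          exact Subtype.ext this
        rw [Bk_succ_def, Finset.card_image_of_injective _ hinj, Finset.card_univ,
          Fintype.card_fun, Fintype.card_coe, Fintype.card_fin, ihcard, sk_succ]

lemma Bk_length (hc : 0 < c) (hc2 : c < Real.log 2) :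
    ∀ k, ∀ b ∈ Bk c k, b.length = Lk c k :=
  fun k => (Bk_length_card hc hc2 k).1

lemma Bk_card (hc : 0 < c) (hc2 : c < Real.log 2) (k : ℕ) :
    (Bk c k).card = sk c k :=
  (Bk_length_card hc hc2 k).2

lemma Bk_nonempty (c : ℝ) (k : ℕ) : (Bk c k).Nonempty := by
  induction k with
  | zero => exact ⟨[false], by simp [Bk]⟩
  | succ k ih =>
      obtain ⟨b, hb⟩ := ih
      exact ⟨_, mem_Bk_succ.2 ⟨fun _ => ⟨b, hb⟩, rfl⟩⟩



lemma Bk_infix_next (hc : 0 < c) (hc2 : c < Real.log 2) {k : ℕ} {b : List Bool}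
    (hb : b ∈ Bk c k) {v : List Bool} (hv : v ∈ Bk c (k+1)) : b <:+: v := by
  obtain ⟨g, rfl⟩ := mem_Bk_succ.1 hv
  have h1 : b <:+: (Bk c k).toList.flatten :=
    List.infix_of_mem_flatten (Finset.mem_toList.2 hb)
  exact h1.trans ((Bk c k).toList.flatten.prefix_append _).isInfix

/-- Every block of level `k` is an infix of every block of any higher level. -/
lemma Bk_infix (hc : 0 < c) (hc2 : c < Real.log 2) :
    ∀ {k m : ℕ}, k < m → ∀ b ∈ Bk c k, ∀ v ∈ Bk c m, b <:+: v := by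
  intro k m hkm
  induction m, hkm using Nat.le_induction with
  | base => exact fun b hb v hv => Bk_infix_next hc hc2 hb hv
  | succ m hm ih =>
      intro b hb v hv
      obtain ⟨w, hw⟩ := Bk_nonempty c m
      exact (ih b hb w hw).trans (Bk_infix_next hc hc2 hw hv)

lemma flatten_concat_exists {P : List Bool → Prop} :
    ∀ (bs : List (List Bool)),
      (∀ b ∈ bs, ∃ cs : List (List Bool), (∀ x ∈ cs, P x) ∧ b = cs.flatten) →
      ∃ ds : List (List Bool), (∀ x ∈ ds, P x) ∧ bs.flatten = ds.flatten := by
  intro bs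
  induction bs with
  | nil => intro _; exact ⟨[], by simp, by simp⟩
  | cons b t ih =>
      intro h
      obtain ⟨cs, hcs, hb⟩ := h b (List.mem_cons_self)
      obtain ⟨ds, hds, ht⟩ := ih (fun x hx => h x (List.mem_cons_of_mem _ hx))
      refine ⟨cs ++ ds, ?_, ?_⟩
      · intro x hx
        rcases List.mem_append.1 hx with hx | hx
        · exact hcs x hx
        · exact hds x hx
      · rw [List.flatten_cons, List.flatten_append, hb, ht]

lemma Bk_decomp1 (hc : 0 < c) (hc2 : c < Real.log 2) {m : ℕ} {v : List Bool}
    (hv : v ∈ Bk c (m+1)) : ∃ bs : List (List Bool),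
      (∀ b ∈ bs, b ∈ Bk c m) ∧ v = bs.flatten := by
  obtain ⟨g, rfl⟩ := mem_Bk_succ.1 hv
  refine ⟨(Bk c m).toList ++ List.ofFn fun i => (g i).1, ?_, ?_⟩
  · intro b hb
    rcases List.mem_append.1 hb with hb | hb
    · exact Finset.mem_toList.1 hb
    · obtain ⟨i, rfl⟩ := List.mem_ofFn.1 hb; exact (g i).2
  · rw [List.flatten_append]

/-- Every block of level `m > k` is a concatenation of blocks of level `k`. -/
lemma Bk_flatten (hc : 0 < c) (hc2 : c < Real.log 2) :
    ∀ {k m : ℕ}, k < m → ∀ v ∈ Bk c m, ∃ bs : List (List Bool),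
      (∀ b ∈ bs, b ∈ Bk c k) ∧ v = bs.flatten := by
  intro k m hkm
  induction m, hkm using Nat.le_induction with
  | base => exact fun v hv => Bk_decomp1 hc hc2 hv
  | succ m hm ih =>
      intro v hv
      obtain ⟨bs, hbs, rfl⟩ := Bk_decomp1 hc hc2 hv
      obtain ⟨ds, hds, hfl⟩ := flatten_concat_exists (P := fun x => x ∈ Bk c k) bs
        (fun b hb => by
          obtain ⟨cs, h1, h2⟩ := ih b (hbs b hb)
          exact ⟨cs, h1, h2⟩)
      exact ⟨ds, hds, hfl⟩

/-- Every block of level `m ≥ k` has a block of level `k` as a prefix. -/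
lemma Bk_prefix (hc : 0 < c) (hc2 : c < Real.log 2) :
    ∀ {k m : ℕ}, k ≤ m → ∀ v ∈ Bk c m, ∃ w ∈ Bk c k, w <+: v := by
  intro k m hkm
  induction m, hkm using Nat.le_induction with
  | base => exact fun v hv => ⟨v, hv, List.prefix_refl v⟩
  | succ m hm ih =>
      intro v hv
      obtain ⟨g, rfl⟩ := mem_Bk_succ.1 hv
      have htne : (Bk c m).toList ≠ [] := by
        intro h0
        rw [Finset.toList_eq_nil] at h0
        exact Finset.not_nonempty_empty (h0 ▸ Bk_nonempty c m)
      obtain ⟨hd, tl, htl⟩ := List.exists_cons_of_ne_nil htne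
      have hhd : hd ∈ Bk c m := Finset.mem_toList.1 (htl ▸ List.mem_cons_self)
      obtain ⟨w, hw, hwp⟩ := ih hd hhd
      refine ⟨w, hw, hwp.trans ?_⟩
      rw [htl, List.flatten_cons, List.append_assoc]
      exact List.prefix_append _ _

/-- Every block of level `k` occurs near the beginning of every block of higher level. -/
lemma Bk_occ (hc : 0 < c) (hc2 : c < Real.log 2) :
    ∀ {k m : ℕ}, k < m → ∀ b ∈ Bk c k, ∀ v ∈ Bk c m,
      ∃ u w, v = u ++ (b ++ w) ∧ u.length + b.length ≤ Lk c (k+1) := by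
  intro k m hkm b hb v hv
  obtain ⟨v', hv', hvp⟩ := Bk_prefix hc hc2 hkm v hv
  obtain ⟨rest, rfl⟩ := hvp
  obtain ⟨g, hg⟩ := mem_Bk_succ.1 hv'
  obtain ⟨t1, t2, ht⟩ := List.append_of_mem (Finset.mem_toList.2 hb)
  refine ⟨t1.flatten, t2.flatten ++ ((List.ofFn fun i => (g i).1).flatten ++ rest), ?_, ?_⟩
  · rw [hg, ht, List.flatten_append, List.flatten_cons]
    simp [List.append_assoc]
  · -- `t1.flatten ++ b` is a prefix of `v'`, whose length is `L (k+1)`... in fact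
    -- `t1.flatten ++ b` is a prefix of `E_k` whose length is `s_k * L_k ≤ L_{k+1}`
    have hlens : ∀ x ∈ (Bk c k).toList, x.length = Lk c k :=
      fun x hx => Bk_length hc hc2 k x (Finset.mem_toList.1 hx)
    have h1 : t1.flatten.length + b.length ≤ (Bk c k).toList.flatten.length := by
      rw [ht, List.flatten_append, List.flatten_cons]
      simp only [List.length_append]
      omega
    have h2 : (Bk c k).toList.flatten.length = sk c k * Lk c k := by
      rw [flatten_length hlens, Finset.length_toList, Bk_card hc hc2]
    have h3 : sk c k * Lk c k ≤ Lk c (k+1) := by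
      rw [Lk_succ]
      exact Nat.mul_le_mul_right _ (by have := nt_ge c (sk c k) (Lk c k); omega)
    omega

/-! ### The language and the subshift -/

def Lang (c : ℝ) : Set (List Bool) := {w | ∃ m, ∃ b ∈ Bk c m, w <:+: b}

lemma Lang_infix {w w' : List Bool} (h : w' <:+: w) (hw : w ∈ Lang c) : w' ∈ Lang c := by
  obtain ⟨m, b, hb, hwb⟩ := hw
  exact ⟨m, b, hb, h.trans hwb⟩

lemma Bk_mem_Lang (k : ℕ) {b : List Bool} (hb : b ∈ Bk c k) : b ∈ Lang c :=
  ⟨k, b, hb, List.infix_refl b⟩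

/-- Concatenations of two copies of a block are in the language. -/
lemma Lang_double (hc : 0 < c) (hc2 : c < Real.log 2) {m : ℕ} {v : List Bool}
    (hv : v ∈ Bk c m) : v ++ v ∈ Lang c := by
  have hns := nt_ge c (sk c m) (Lk c m)
  obtain ⟨j, hj⟩ : ∃ j, nt c (sk c m) (Lk c m) - sk c m = j + 2 :=
    ⟨nt c (sk c m) (Lk c m) - sk c m - 2, by omega⟩
  refine ⟨m + 1, _, mem_Bk_succ.2 ⟨fun _ => ⟨v, hv⟩, rfl⟩, ?_⟩
  rw [List.ofFn_const, hj, List.replicate_succ, List.replicate_succ,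
    List.flatten_cons, List.flatten_cons]
  refine ⟨(Bk c m).toList.flatten, (List.replicate j v).flatten, ?_⟩
  simp [List.append_assoc]

def win (x : ℤ → Bool) (i : ℤ) (l : ℕ) : List Bool := List.ofFn fun j : Fin l => x (i + j)

@[simp] lemma win_length (x : ℤ → Bool) (i : ℤ) (l : ℕ) : (win x i l).length = l := by
  simp [win]

lemma win_getElem (x : ℤ → Bool) (i : ℤ) (l : ℕ) (j : ℕ) (hj : j < (win x i l).length) :
    (win x i l)[j] = x (i + j) := by
  simp [win]


lemma win_eq_drop_take (x : ℤ → Bool) {i i' : ℤ} {l l' : ℕ} (h1 : i ≤ i')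
    (h2 : (i' : ℤ) + l' ≤ i + l) :
    win x i' l' = ((win x i l).drop (i' - i).toNat).take l' := by
  have hd : ((i' - i).toNat : ℤ) = i' - i := Int.toNat_of_nonneg (by omega)
  apply List.ext_getElem
  · simp only [win_length, List.length_take, List.length_drop, win_length]
    omega
  · intro j hj1 hj2
    rw [win_getElem]
    rw [List.getElem_take, List.getElem_drop, win_getElem]
    congr 1
    omega

lemma drop_take_infix (W : List Bool) (a l : ℕ) : (W.drop a).take l <:+: W :=
  ((List.take_prefix l (W.drop a)).isInfix).trans (W.drop_suffix a).isInfix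

lemma win_infix (x : ℤ → Bool) {i i' : ℤ} {l l' : ℕ} (h1 : i ≤ i')
    (h2 : (i' : ℤ) + l' ≤ i + l) : win x i' l' <:+: win x i l := by
  rw [win_eq_drop_take x h1 h2]
  exact drop_take_infix _ _ _

lemma win_eq_iff {x y : ℤ → Bool} {i : ℤ} {l : ℕ} :
    win y i l = win x i l ↔ ∀ j : ℕ, j < l → y (i + j) = x (i + j) := by
  constructor
  · intro h j hj
    have h1 : (win y i l)[j]'(by simpa using hj) = (win x i l)[j]'(by simpa using hj) :=
      List.getElem_of_eq h _
    rwa [win_getElem _ _ _ _ (by simpa using hj), win_getElem _ _ _ _ (by simpa using hj)] at h1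
  · intro h
    apply List.ext_getElem (by simp)
    intro j hj1 hj2
    rw [win_getElem _ _ _ _ hj1, win_getElem _ _ _ _ hj2]
    exact h j (by simpa using hj1)

lemma cylinder_isOpen (x : ℤ → Bool) (i : ℤ) (l : ℕ) :
    IsOpen {y : ℤ → Bool | win y i l = win x i l} := by
  have heq : {y : ℤ → Bool | win y i l = win x i l}
      = ⋂ j ∈ Finset.range l, {y : ℤ → Bool | y (i + j) = x (i + j)} := by
    ext y
    simp only [Set.mem_setOf_eq, Set.mem_iInter, Finset.mem_range]
    exact win_eq_iff.trans (by constructor <;> intro h j hj <;> exact h j hj)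
  rw [heq]
  refine isOpen_biInter_finset fun j _ => ?_
  show IsOpen ((fun y : ℤ → Bool => y (i + (j:ℤ))) ⁻¹' {x (i + (j:ℤ))})
  exact IsOpen.preimage (continuous_apply ((i + j : ℤ))) (isOpen_discrete _)

lemma winSet_isOpen (S : Set (List Bool)) (i : ℤ) (l : ℕ) :
    IsOpen {x : ℤ → Bool | win x i l ∈ S} := by
  rw [isOpen_iff_mem_nhds]
  intro x hx
  refine Filter.mem_of_superset ((cylinder_isOpen x i l).mem_nhds rfl) ?_
  intro y hy
  simp only [Set.mem_setOf_eq] at *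
  rw [hy]
  exact hx

lemma winSet_isClosed (S : Set (List Bool)) (i : ℤ) (l : ℕ) :
    IsClosed {x : ℤ → Bool | win x i l ∈ S} := by
  rw [← isOpen_compl_iff]
  have : {x : ℤ → Bool | win x i l ∈ S}ᶜ = {x : ℤ → Bool | win x i l ∈ Sᶜ} := rfl
  rw [this]
  exact winSet_isOpen _ _ _

/-- Embedding a finite word into a two-sided sequence. -/
def emb (W : List Bool) (q : ℕ) : ℤ → Bool := fun t =>
  if h : 0 ≤ t + q ∧ (t + q).toNat < W.length then W[(t + q).toNat] else false

lemma emb_win (W : List Bool) (q : ℕ) (i : ℤ) (l : ℕ) (h0 : 0 ≤ i + q)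
    (h1 : (i + q).toNat + l ≤ W.length) :
    win (emb W q) i l = (W.drop (i + q).toNat).take l := by
  apply List.ext_getElem
  · simp only [win_length, List.length_take, List.length_drop]
    omega
  · intro j hj1 hj2
    rw [win_getElem _ _ _ _ hj1, List.getElem_take, List.getElem_drop]
    have hq : (i + j + q).toNat = (i + q).toNat + j := by omega
    have hin : 0 ≤ i + j + q ∧ (i + j + q).toNat < W.length := by
      constructor
      · omega
      · simp only [win_length] at hj1; omega
    simp only [emb]
    rw [dif_pos hin]
    congr 1 <;> omega

def Lam (c : ℝ) : Set (ℤ → Bool) := {x | ∀ i l, win x i l ∈ Lang c}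

/-! ### Topological properties of the subshift -/

lemma shiftMap_iterate (x : ℤ → Bool) (m : ℕ) (i : ℤ) :
    (shiftMap^[m] x) i = x (i + m) := by
  induction m generalizing x i with
  | zero => simp
  | succ m ih =>
      rw [Function.iterate_succ_apply, ih (shiftMap x) i]
      simp only [shiftMap]
      congr 1
      push_cast
      ring

lemma Lam_isClosed (c : ℝ) : IsClosed (Lam c) := by
  have : Lam c = ⋂ (i : ℤ) (l : ℕ), {x : ℤ → Bool | win x i l ∈ Lang c} := by
    ext x; simp [Lam, Set.mem_iInter]
  rw [this]
  exact isClosed_iInter fun i => isClosed_iInter fun l => winSet_isClosed _ _ _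

lemma Lam_isCompact (c : ℝ) : IsCompact (Lam c) :=
  (Lam_isClosed c).isCompact

lemma win_shift (x : ℤ → Bool) (i : ℤ) (l : ℕ) :
    win (shiftMap x) i l = win x (i + 1) l := by
  apply List.ext_getElem (by simp)
  intro j hj1 hj2
  rw [win_getElem _ _ _ _ hj1, win_getElem _ _ _ _ hj2]
  simp only [shiftMap]
  congr 1
  ring

lemma Lam_invariant (c : ℝ) : shiftMap '' Lam c = Lam c := by
  apply Set.Subset.antisymm
  · rintro _ ⟨x, hx, rfl⟩ i l
    rw [win_shift]
    exact hx _ _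
  · intro x hx
    refine ⟨fun n => x (n - 1), fun i l => ?_, ?_⟩
    · have : win (fun n => x (n - 1)) i l = win x (i - 1) l := by
        apply List.ext_getElem (by simp)
        intro j hj1 hj2
        rw [win_getElem _ _ _ _ hj1, win_getElem _ _ _ _ hj2]
        congr 1
        ring
      rw [this]
      exact hx _ _
    · funext n
      simp [shiftMap]

lemma occ_lemma (hc : 0 < c) (hc2 : c < Real.log 2) {k : ℕ} {b : List Bool}
    (hb : b ∈ Bk c k) (n : ℕ) :
    ∃ u w : List Bool, u ++ (b ++ w) ∈ Lang c ∧ n ≤ u.length ∧ n ≤ w.length := by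
  set m := n + Lk c (k+1) + k + 1 with hm
  have hkm : k < m := by omega
  obtain ⟨v, hv⟩ := Bk_nonempty c m
  have hvlen : v.length = Lk c m := Bk_length hc hc2 m v hv
  have hLm : n + Lk c (k+1) ≤ Lk c m := by
    have := Lk_ge hc hc2 m
    omega
  obtain ⟨u₀, w₀, hocc, hlen⟩ := Bk_occ hc hc2 hkm b hb v hv
  have hblen : b.length = Lk c k := Bk_length hc hc2 k b hb
  have hw₀ : u₀.length + b.length + w₀.length = Lk c m := by
    have := congrArg List.length hocc
    simp only [List.length_append] at this
    omega
  refine ⟨v ++ u₀, w₀, ?_, ?_, ?_⟩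
  · have : (v ++ u₀) ++ (b ++ w₀) = v ++ v := by
      rw [List.append_assoc, ← hocc]
    rw [this]
    exact Lang_double hc hc2 hv
  · simp only [List.length_append]
    omega
  · have hL1 : Lk c (k+1) ≥ u₀.length + b.length := hlen
    omega

/-- Every block can be realized as the central window of a point of the subshift. -/
lemma exists_point (hc : 0 < c) (hc2 : c < Real.log 2) {k : ℕ} {b : List Bool}
    (hb : b ∈ Bk c k) : ∃ x ∈ Lam c, win x 0 (Lk c k) = b := by
  set L := Lk c k with hL
  have hblen : b.length = L := Bk_length hc hc2 k b hb
  set C : ℕ → Set (ℤ → Bool) := fun n =>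
    {x | win x (-(n:ℤ)) (L + 2*n) ∈ Lang c ∧ win x 0 L = b} with hC
  have hCclosed : ∀ n, IsClosed (C n) := by
    intro n
    exact (winSet_isClosed (Lang c) _ _).inter (winSet_isClosed {b} 0 L)
  have hCsub : ∀ n, C (n+1) ⊆ C n := by
    intro n x hx
    refine ⟨Lang_infix (win_infix x (by push_cast; omega) (by push_cast; omega)) hx.1, hx.2⟩
  have hCne : ∀ n, (C n).Nonempty := by
    intro n
    obtain ⟨u, w, hW, hu, hw⟩ := occ_lemma hc hc2 hb n
    set W := u ++ (b ++ w) with hWdef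
    have hWlen : W.length = u.length + (b.length + w.length) := by simp [hWdef]
    refine ⟨emb W u.length, ?_, ?_⟩
    · have h0 : (0:ℤ) ≤ -(n:ℤ) + u.length := by push_cast; omega
      have ht : ((-(n:ℤ) + u.length)).toNat = u.length - n := by omega
      have h1 : ((-(n:ℤ) + u.length)).toNat + (L + 2*n) ≤ W.length := by omega
      rw [emb_win W u.length _ _ h0 h1]
      exact Lang_infix (drop_take_infix _ _ _) hW
    · have h0 : (0:ℤ) ≤ (0:ℤ) + u.length := by positivity
      have ht : (((0:ℤ) + u.length)).toNat = u.length := by omega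
      have h1 : (((0:ℤ) + u.length)).toNat + L ≤ W.length := by omega
      rw [emb_win W u.length _ _ h0 h1, ht, hWdef, List.drop_left, ← hblen,
        List.take_append_of_le_length le_rfl, List.take_length]
  have hC0 : IsCompact (C 0) := (hCclosed 0).isCompact
  obtain ⟨x, hx⟩ := IsCompact.nonempty_iInter_of_sequence_nonempty_isCompact_isClosed
    C hCsub hCne hC0 hCclosed
  simp only [Set.mem_iInter] at hx
  refine ⟨x, ?_, (hx 0).2⟩
  intro i l
  obtain ⟨n, hn1, hn2⟩ : ∃ n : ℕ, -(n:ℤ) ≤ i ∧ (i:ℤ) + l ≤ -(n:ℤ) + (L + 2*n) := by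
    refine ⟨i.natAbs + l, by omega, by omega⟩
  exact Lang_infix (win_infix x hn1 hn2) (hx n).1

lemma Lam_nonempty (hc : 0 < c) (hc2 : c < Real.log 2) : (Lam c).Nonempty := by
  obtain ⟨b, hb⟩ := Bk_nonempty c 0
  obtain ⟨x, hx, -⟩ := exists_point hc hc2 hb
  exact ⟨x, hx⟩

lemma window_block (hc : 0 < c) (hc2 : c < Real.log 2) {k : ℕ} {w : List Bool}
    (hw : w ∈ Lang c) (hlen : w.length = 2 * Lk c (k+1)) :
    ∃ b ∈ Bk c (k+1), b <:+: w := by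
  obtain ⟨M, bM, hbM, hwb⟩ := hw
  have hL1 := Lk_pos hc hc2 (k+1)
  have hbMlen : bM.length = Lk c M := Bk_length hc hc2 M bM hbM
  have hwlen : w.length ≤ bM.length := hwb.length_le
  have hkM : k + 1 < M := by
    by_contra h
    push_neg at h
    have := Lk_mono hc hc2 h
    omega
  obtain ⟨bs, hbs, rfl⟩ := Bk_flatten hc hc2 hkM bM hbM
  have hlens : ∀ x ∈ bs, x.length = Lk c (k+1) :=
    fun x hx => Bk_length hc hc2 (k+1) x (hbs x hx)
  obtain ⟨b, hbmem, hbw⟩ := block_in_window hL1 bs hlens w hwb (by omega)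
  exact ⟨b, hbs b hbmem, hbw⟩

lemma iterate_mem (Λ' : Set (ℤ → Bool)) (hinv : shiftMap '' Λ' = Λ') {y : ℤ → Bool}
    (hy : y ∈ Λ') (m : ℕ) : shiftMap^[m] y ∈ Λ' := by
  induction m with
  | zero => simpa using hy
  | succ m ih =>
      rw [Function.iterate_succ_apply']
      rw [← hinv]
      exact ⟨_, ih, rfl⟩

/-- Minimality of the subshift. -/
lemma Lam_minimal (hc : 0 < c) (hc2 : c < Real.log 2) :
    IsMinimalSet shiftMap (Lam c) := by
  refine ⟨Lam_nonempty hc hc2, Lam_isCompact c, Lam_invariant c, ?_⟩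
  intro Λ' hsub hne hcomp hinv
  apply Set.Subset.antisymm hsub
  intro x hx
  obtain ⟨y, hy⟩ := hne
  have hyL : y ∈ Lam c := hsub hy
  -- key approximation claim
  have key : ∀ n : ℕ, ∃ z ∈ Λ', ∀ i : ℤ, i.natAbs ≤ n → z i = x i := by
    intro n
    have hw : win x (-(n:ℤ)) (2*n+1) ∈ Lang c := hx _ _
    obtain ⟨M, bM, hbM, hwb⟩ := hw
    have hv : win y 0 (2 * Lk c (M+1)) ∈ Lang c := hyL _ _
    obtain ⟨b', hb', hbv⟩ := window_block hc hc2 (k := M) hv (by simp)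
    have hwv : win x (-(n:ℤ)) (2*n+1) <:+: win y 0 (2 * Lk c (M+1)) :=
      (hwb.trans (Bk_infix hc hc2 (Nat.lt_succ_self M) bM hbM b' hb')).trans hbv
    obtain ⟨s, e, hse⟩ := hwv
    set p := s.length with hp
    have hlen : p + (2*n+1) + e.length = 2 * Lk c (M+1) := by
      have h := congrArg List.length hse
      simp only [List.length_append, win_length] at h
      omega
    refine ⟨shiftMap^[p + n] y, iterate_mem Λ' hinv hy (p+n), ?_⟩
    intro i hi
    rw [shiftMap_iterate]
    have hj : ((i + n).toNat : ℤ) = i + n := by omega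
    set j := (i + n).toNat with hjdef
    have hjlt : j < 2*n+1 := by omega
    have h1 : y (i + (p + n)) = (win y 0 (2 * Lk c (M+1)))[p + j]'(by simp; omega) := by
      rw [win_getElem _ _ _ _ (by simp; omega)]
      congr 1
      push_cast
      omega
    have h2 : (win y 0 (2 * Lk c (M+1)))[p + j]'(by simp; omega)
        = (win x (-(n:ℤ)) (2*n+1))[j]'(by simp; omega) := by
      have hb1 : p + j < (win y 0 (2 * Lk c (M + 1))).length := by simp; omega
      rw [List.getElem_of_eq hse.symm hb1]
      rw [List.getElem_append_left
        (show p + j < (s ++ win x (-(n:ℤ)) (2*n+1)).length by simp; omega)]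
      rw [List.getElem_append_right (by omega : s.length ≤ p + j)]
      congr 1
      omega
    have h3 : (win x (-(n:ℤ)) (2*n+1))[j]'(by simp; omega) = x i := by
      rw [win_getElem _ _ _ _ (by simp; omega)]
      congr 1
      omega
    have hcast : (((p + n : ℕ)):ℤ) = (p:ℤ) + n := by push_cast; ring
    rw [hcast]
    exact h1.trans (h2.trans h3)
  choose z hz1 hz2 using key
  have hten : Filter.Tendsto z atTop (nhds x) := by
    rw [tendsto_pi_nhds]
    intro i
    apply Filter.Tendsto.congr' _ tendsto_const_nhds
    rw [Filter.EventuallyEq, Filter.eventually_atTop]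
    exact ⟨i.natAbs, fun n hn => (hz2 n i (by omega)).symm⟩
  exact hcomp.isClosed.mem_of_tendsto hten (Filter.Eventually.of_forall hz1)

/-! ### Entropy: entourages -/

def UN (N : ℕ) : Set ((ℤ → Bool) × (ℤ → Bool)) :=
  {p | ∀ i : ℤ, |i| ≤ N → p.1 i = p.2 i}

lemma UN_eq_iInter (N : ℕ) :
    UN N = ⋂ i ∈ Finset.Icc (-(N:ℤ)) N,
      (fun p : (ℤ → Bool) × (ℤ → Bool) => (p.1 i, p.2 i)) ⁻¹' SetRel.id := by
  ext ⟨a, b⟩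
  simp only [UN, Set.mem_setOf_eq, Set.mem_iInter, Set.mem_preimage, SetRel.mem_id,
    Finset.mem_Icc]
  constructor
  · intro h i hi
    exact h i (abs_le.2 hi)
  · intro h i hi
    exact h i (abs_le.1 hi)

lemma UN_mem_uniformity (N : ℕ) : UN N ∈ 𝓤 (ℤ → Bool) := by
  rw [UN_eq_iInter]
  apply Filter.biInter_finset_mem (Finset.Icc (-(N:ℤ)) N) |>.2
  intro i _
  rw [Pi.uniformity]
  apply Filter.mem_iInf_of_mem i
  apply Filter.preimage_mem_comap
  rw [bot_uniformity]
  exact Filter.mem_principal_self SetRel.id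

lemma exists_UN_subset {U : Set ((ℤ → Bool) × (ℤ → Bool))} (hU : U ∈ 𝓤 (ℤ → Bool)) :
    ∃ N : ℕ, UN N ⊆ U := by
  rw [Pi.uniformity] at hU
  rw [Filter.mem_iInf'] at hU
  obtain ⟨I, hIfin, V, hV, hVuniv, -, hUeq⟩ := hU
  refine ⟨(hIfin.toFinset.sup fun i => i.natAbs), ?_⟩
  intro p hp
  rw [hUeq]
  rw [Set.mem_iInter]
  intro i
  rcases Classical.em (i ∈ I) with hi | hi
  · have hVi := hV i
    rw [bot_uniformity, Filter.mem_comap] at hVi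
    obtain ⟨t, ht, hsub⟩ := hVi
    rw [Filter.mem_principal] at ht
    apply hsub
    apply Set.mem_preimage.2
    apply ht
    have : p.1 i = p.2 i := by
      apply hp i
      have : i.natAbs ≤ hIfin.toFinset.sup fun i => i.natAbs :=
        Finset.le_sup (hIfin.mem_toFinset.2 hi)
      rw [Int.abs_eq_natAbs]
      exact_mod_cast this
    rw [this]
    exact rfl
  · rw [hVuniv i hi]
    exact Set.mem_univ p

lemma UN_symm (N : ℕ) : SetRel.IsSymm (UN N) := by
  exact ⟨fun a b h i hi => (h i hi).symm⟩

lemma UN_comp (N : ℕ) : SetRel.comp (UN N) (UN N) = UN N := by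
  apply Set.Subset.antisymm
  · rintro ⟨a, b⟩ ⟨z, h1, h2⟩ i hi
    exact (h1 i hi).trans (h2 i hi)
  · rintro ⟨a, b⟩ h
    exact ⟨a, fun i _ => rfl, h⟩

lemma UN_idRel (N : ℕ) : SetRel.id ⊆ UN N := by
  rintro ⟨a, b⟩ hab i _
  rw [SetRel.mem_id] at hab
  rw [hab]

/-! ### Entropy: counting words -/

/-- A finite set of words containing all words of the language of length `l`,
of cardinality at most `L_k · s_k^(l/L_k + 2)`. -/
noncomputable def Wn (c : ℝ) (k l : ℕ) : Finset (List Bool) :=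
  Finset.image
    (fun rg : ℕ × (Fin (l / Lk c k + 2) → {b // b ∈ Bk c k}) =>
      (((List.ofFn fun i => (rg.2 i).1).flatten).drop rg.1).take l)
    ((Finset.range (Lk c k)) ×ˢ Finset.univ)

lemma Wn_card (hc : 0 < c) (hc2 : c < Real.log 2) (k l : ℕ) :
    (Wn c k l).card ≤ Lk c k * sk c k ^ (l / Lk c k + 2) := by
  classical
  calc (Wn c k l).card
      ≤ ((Finset.range (Lk c k)) ×ˢ
          (Finset.univ : Finset (Fin (l / Lk c k + 2) → {b // b ∈ Bk c k}))).card :=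
        Finset.card_image_le
    _ = Lk c k * sk c k ^ (l / Lk c k + 2) := by
        rw [Finset.card_product, Finset.card_range, Finset.card_univ, Fintype.card_fun,
          Fintype.card_coe, Fintype.card_fin, Bk_card hc hc2]

lemma mem_Wn (hc : 0 < c) (hc2 : c < Real.log 2) {k l : ℕ} {w : List Bool}
    (hw : w ∈ Lang c) (hlen : w.length = l) : w ∈ Wn c k l := by
  classical
  have hLpos := Lk_pos hc hc2 k
  obtain ⟨b₀, hb₀⟩ := Bk_nonempty c k
  obtain ⟨bs, hbs, hwf⟩ : ∃ bs : List (List Bool),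
      (∀ b ∈ bs, b ∈ Bk c k) ∧ w <:+: bs.flatten := by
    obtain ⟨M₀, b, hb, hwb⟩ := hw
    rcases lt_or_ge k M₀ with h | h
    · obtain ⟨bs, h1, h2⟩ := Bk_flatten hc hc2 h b hb
      exact ⟨bs, h1, h2 ▸ hwb⟩
    · obtain ⟨v, hv⟩ := Bk_nonempty c (k+1)
      obtain ⟨bs, h1, h2⟩ := Bk_decomp1 hc hc2 hv
      exact ⟨bs, h1, h2 ▸ (hwb.trans (Bk_infix hc hc2 (by omega) b hb v hv))⟩
  have hbl : ∀ b ∈ bs, b.length = Lk c k := fun b hb => Bk_length hc hc2 k b (hbs b hb)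
  obtain ⟨sl, e, hse⟩ := hwf
  have hwd : w = (bs.flatten.drop sl.length).take l := by
    have h1 : bs.flatten.drop sl.length = w ++ e := by
      rw [← hse, List.append_assoc, List.drop_left]
    rw [h1, ← hlen, List.take_append_of_le_length le_rfl, List.take_length]
  have hple : sl.length + l ≤ bs.flatten.length := by
    have h2 := congrArg List.length hse
    simp only [List.length_append, hlen] at h2
    omega
  set p := sl.length with hpdef
  set t := p / Lk c k with htdef
  set r := p % Lk c k with hrdef
  have hpr : Lk c k * t + r = p := Nat.div_add_mod p (Lk c k)
  have hmul : t * Lk c k = Lk c k * t := Nat.mul_comm _ _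
  have hrL : r < Lk c k := Nat.mod_lt _ hLpos
  set ds := bs.drop t with hds
  have hdsf : bs.flatten.drop (t * Lk c k) = ds.flatten := flatten_drop t bs hbl
  have hwd2 : w = (ds.flatten.drop r).take l := by
    rw [hwd, ← hdsf, List.drop_drop]
    congr 2
    omega
  have hdsl : ds.flatten.length = bs.flatten.length - t * Lk c k := by
    rw [← hdsf, List.length_drop]
  have hrl_ds : r + l ≤ ds.flatten.length := by omega
  set q := l / Lk c k + 2 with hq
  set cs := (ds ++ List.replicate q b₀).take q with hcs
  have hcsl : cs.length = q := by
    rw [hcs, List.length_take, List.length_append, List.length_replicate]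
    omega
  have hcsm : ∀ x ∈ cs, x ∈ Bk c k := by
    intro x hx
    rcases List.mem_append.1 (List.mem_of_mem_take hx) with h | h
    · exact hbs x (List.mem_of_mem_drop h)
    · rw [List.eq_of_mem_replicate h]; exact hb₀
  have hcsbl : ∀ x ∈ cs, x.length = Lk c k := fun x hx => Bk_length hc hc2 k x (hcsm x hx)
  have hcsfl : cs.flatten.length = q * Lk c k := by rw [flatten_length hcsbl, hcsl]
  have hrl_cs : r + l ≤ q * Lk c k := by
    have h1 := Nat.div_add_mod l (Lk c k)
    have h2 : q * Lk c k = Lk c k * (l / Lk c k) + 2 * Lk c k := by rw [hq]; ring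
    have h3 : l % Lk c k < Lk c k := Nat.mod_lt _ hLpos
    omega
  have hpre1 : ds.flatten <+: (ds ++ List.replicate q b₀).flatten := by
    rw [List.flatten_append]; exact List.prefix_append _ _
  have hpre2 : cs.flatten <+: (ds ++ List.replicate q b₀).flatten := by
    conv_rhs => rw [← List.take_append_drop q (ds ++ List.replicate q b₀)]
    rw [List.flatten_append]
    exact List.prefix_append _ _
  have hwd3 : w = (cs.flatten.drop r).take l := by
    rw [hwd2, prefix_drop_take hpre1 hrl_ds,
      ← prefix_drop_take hpre2 (by rw [hcsfl]; exact hrl_cs)]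
  have hq' : ∀ i : Fin q, (i : ℕ) < cs.length := by intro i; rw [hcsl]; exact i.2
  set g : Fin q → {b // b ∈ Bk c k} :=
    fun i => ⟨cs[(i:ℕ)]'(hq' i), hcsm _ (List.getElem_mem _)⟩ with hg
  have hofn : (List.ofFn fun i => (g i).1) = cs := by
    apply List.ext_getElem (by rw [List.length_ofFn, hcsl])
    intro j h1 h2
    rw [List.getElem_ofFn]
  rw [Wn, Finset.mem_image]
  refine ⟨(r, g), Finset.mem_product.2 ⟨Finset.mem_range.2 hrL, Finset.mem_univ _⟩, ?_⟩
  simp only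
  rw [hofn]
  exact hwd3.symm

/-! ### Entropy: upper bound -/

lemma netEntropy_eq_coverEntropy (c : ℝ) :
    netEntropy shiftMap (Lam c) = coverEntropy shiftMap (Lam c) :=
  (coverEntropy_eq_iSup_netEntropyEntourage shiftMap (Lam c)).symm

lemma mem_ball_dyn {T : (ℤ → Bool) → (ℤ → Bool)} {U : Set ((ℤ → Bool) × (ℤ → Bool))}
    {n : ℕ} {x z : ℤ → Bool} :
    z ∈ ball x (dynEntourage T U n) ↔ ∀ m < n, (T^[m] x, T^[m] z) ∈ U := by
  simp [ball, dynEntourage]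

lemma ediv_nat (r : ℝ) (m : ℕ) : (r : EReal) / ((m : ℕ) : EReal) = ((r / m : ℝ) : EReal) := by
  rw [show ((m:ℕ):EReal) = ((m:ℝ):EReal) by norm_cast, ← EReal.coe_div]

lemma elog_natCast (a : ℕ) (ha : 1 ≤ a) :
    ENNReal.log (a : ENNReal) = ((Real.log a : ℝ) : EReal) := by
  rw [show ((a:ENNReal)) = ENNReal.ofReal (a:ℝ) by simp]
  rw [ENNReal.log_ofReal_of_pos (by exact_mod_cast ha)]

open Classical in
noncomputable def ptOf (c : ℝ) (N : ℕ) (len : ℕ) (w : List Bool) : ℤ → Bool :=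
  if h : ∃ x ∈ Lam c, win x (-(N:ℤ)) len = w then h.choose else fun _ => false

lemma ptOf_spec {c : ℝ} {N len : ℕ} {w : List Bool}
    (h : ∃ x ∈ Lam c, win x (-(N:ℤ)) len = w) :
    ptOf c N len w ∈ Lam c ∧ win (ptOf c N len w) (-(N:ℤ)) len = w := by
  unfold ptOf
  rw [dif_pos h]
  exact ⟨h.choose_spec.1, h.choose_spec.2⟩

lemma cover_lemma (hc : 0 < c) (hc2 : c < Real.log 2) (N n k : ℕ) :
    IsDynCoverOf shiftMap (Lam c) (UN N) n
      ((Wn c k (n + 2*N)).image (ptOf c N (n + 2*N))) := by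
  intro x hx
  have hex : ∃ y ∈ Lam c, win y (-(N:ℤ)) (n+2*N) = win x (-(N:ℤ)) (n+2*N) := ⟨x, hx, rfl⟩
  obtain ⟨hy1, hy2⟩ := ptOf_spec hex
  have hwmem : win x (-(N:ℤ)) (n + 2*N) ∈ Wn c k (n + 2*N) :=
    mem_Wn hc hc2 (hx _ _) (win_length _ _ _)
  refine ⟨_, Finset.mem_coe.2 (Finset.mem_image_of_mem _ hwmem), ?_⟩
  · refine (mem_ball_dyn (x := x)).2 ?_
    intro m hm
    intro i hi
    simp only
    rw [shiftMap_iterate, shiftMap_iterate]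
    have hiN : i.natAbs ≤ N := by rw [Int.abs_eq_natAbs] at hi; exact_mod_cast hi
    have hj : ∃ j : ℕ, j < n + 2*N ∧ (i + m : ℤ) = -(N:ℤ) + j :=
      ⟨(i + m + N).toNat, by omega, by omega⟩
    obtain ⟨j, hj1, hj2⟩ := hj
    have := win_eq_iff.1 hy2 j hj1
    rw [hj2, this]

lemma cEE_le_hk (hc : 0 < c) (hc2 : c < Real.log 2) (N k : ℕ) :
    coverEntropyEntourage shiftMap (Lam c) (UN N)
      ≤ ((Real.log (sk c k) / Lk c k : ℝ) : EReal) := by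
  have hmapsto : Set.MapsTo shiftMap (Lam c) (Lam c) := fun x hx => by
    rw [← Lam_invariant c]; exact ⟨x, hx, rfl⟩
  have hL := Lk_pos hc hc2 k
  have hs := sk_two hc hc2 k
  have hLr : (0:ℝ) < Lk c k := by exact_mod_cast hL
  have hlogs : 0 < Real.log (sk c k) := Real.log_pos (by exact_mod_cast hs)
  have hlogL : 0 ≤ Real.log (Lk c k) := Real.log_nonneg (by exact_mod_cast hL)
  set A : ℝ := Real.log (Lk c k) + 2*Real.log (sk c k)
    + (2*N/(Lk c k))*Real.log (sk c k) with hA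
  set b : ℕ → ℝ := fun m => Real.log (sk c k) / Lk c k + A / m with hb
  have hblim : Filter.Tendsto b atTop (nhds (Real.log (sk c k) / Lk c k)) := by
    have h1 := tendsto_const_div_atTop_nhds_zero_nat A
    have h2 := Filter.Tendsto.const_add (Real.log (sk c k) / Lk c k) h1
    simpa using h2
  have key : ∀ m : ℕ, 1 ≤ m →
      coverEntropyEntourage shiftMap (Lam c) (UN N) ≤ ((b m : ℝ) : EReal) := by
    intro m hm
    set e := (m + 2*N) / Lk c k + 2 with he
    have hcard : ((Wn c k (m + 2*N)).image (ptOf c N (m + 2*N))).card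
        ≤ Lk c k * sk c k ^ e := le_trans Finset.card_image_le (Wn_card hc hc2 k _)
    have hb1 : 1 ≤ Lk c k * sk c k ^ e := by
      have h0 : 0 < Lk c k * sk c k ^ e := by positivity
      omega
    have step1 : coverEntropyEntourage shiftMap (Lam c) (UN N)
        ≤ ENNReal.log (((Wn c k (m + 2*N)).image (ptOf c N (m + 2*N))).card)
          / ((m : ℕ) : EReal) := by
      haveI := UN_symm N
      have := IsDynCoverOf.coverEntropyEntourage_le_log_card_div hmapsto
        (show m ≠ 0 by omega) (cover_lemma hc hc2 N m k)
      rwa [UN_comp N] at this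
    have hmr : (0:ℝ) < m := by exact_mod_cast hm
    have hlogeq : Real.log ((Lk c k : ℝ) * (sk c k : ℝ)^e)
        = Real.log (Lk c k) + e * Real.log (sk c k) := by
      rw [Real.log_mul (ne_of_gt hLr) (by positivity), Real.log_pow]
    have he_le : (e:ℝ) ≤ ((m:ℝ) + 2*N)/(Lk c k) + 2 := by
      rw [he]
      push_cast
      have hdl : ((((m + 2*N) / Lk c k : ℕ)) : ℝ) ≤ ((m + 2*N : ℕ) : ℝ) / ((Lk c k : ℕ) : ℝ) :=
        Nat.cast_div_le
      push_cast at hdl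
      linarith
    have hnum : Real.log ((Lk c k * sk c k ^ e : ℕ) : ℝ)
        ≤ Real.log (Lk c k) + (((m:ℝ) + 2*N)/(Lk c k) + 2) * Real.log (sk c k) := by
      push_cast
      rw [hlogeq]
      nlinarith [hlogs.le, he_le]
    have hbm : (Real.log (Lk c k) + (((m:ℝ) + 2*N)/(Lk c k) + 2) * Real.log (sk c k)) / m
        = b m := by
      rw [hb, hA]
      field_simp
      ring
    calc coverEntropyEntourage shiftMap (Lam c) (UN N)
        ≤ ENNReal.log (((Wn c k (m + 2*N)).image (ptOf c N (m + 2*N))).card)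
          / ((m : ℕ) : EReal) := step1
      _ ≤ ENNReal.log ((Lk c k * sk c k ^ e : ℕ) : ENNReal) / ((m : ℕ) : EReal) := by
          apply EReal.div_le_div_right_of_nonneg (by exact_mod_cast Nat.zero_le m)
          exact ENNReal.log_monotone (by exact_mod_cast hcard)
      _ = ((Real.log ((Lk c k * sk c k ^ e : ℕ)) / m : ℝ) : EReal) := by
          rw [elog_natCast _ hb1, ediv_nat]
      _ ≤ ((b m : ℝ) : EReal) := by
          apply EReal.coe_le_coe_iff.2
          rw [← hbm]
          gcongr
  calc coverEntropyEntourage shiftMap (Lam c) (UN N)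
      ≤ Filter.liminf (fun m : ℕ => ((b m : ℝ) : EReal)) atTop :=
        Filter.le_liminf_of_le (by isBoundedDefault)
          (Filter.eventually_atTop.2 ⟨1, fun m hm => key m hm⟩)
    _ = ((Real.log (sk c k) / Lk c k : ℝ) : EReal) :=
        (EReal.tendsto_coe.2 hblim).liminf_eq

lemma entropy_upper (hc : 0 < c) (hc2 : c < Real.log 2) :
    netEntropy shiftMap (Lam c) ≤ (c : EReal) := by
  rw [netEntropy_eq_coverEntropy]
  rw [show coverEntropy shiftMap (Lam c)
      = ⨆ U ∈ 𝓤 (ℤ → Bool), coverEntropyEntourage shiftMap (Lam c) U from rfl]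
  apply iSup₂_le
  intro U hU
  obtain ⟨N, hN⟩ := exists_UN_subset hU
  calc coverEntropyEntourage shiftMap (Lam c) U
      ≤ coverEntropyEntourage shiftMap (Lam c) (UN N) :=
        coverEntropyEntourage_antitone shiftMap (Lam c) hN
    _ ≤ Filter.liminf (fun k : ℕ => ((Real.log (sk c k) / Lk c k : ℝ) : EReal)) atTop :=
        Filter.le_liminf_of_le (by isBoundedDefault)
          (Filter.Eventually.of_forall (fun k => cEE_le_hk hc hc2 N k))
    _ = (c : EReal) := (EReal.tendsto_coe.2 (hk_tendsto hc hc2)).liminf_eq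

/-! ### Entropy: lower bound -/

open Classical in
noncomputable def ptB (c : ℝ) (L : ℕ) (b : List Bool) : ℤ → Bool :=
  if h : ∃ x ∈ Lam c, win x 0 L = b then h.choose else fun _ => false

lemma net_lemma (hc : 0 < c) (hc2 : c < Real.log 2) (k : ℕ) :
    IsDynNetIn shiftMap (Lam c) (UN 0) (Lk c k)
      ((Bk c k).image (ptB c (Lk c k)))
    ∧ ((Bk c k).image (ptB c (Lk c k))).card = sk c k := by
  classical
  have hspec : ∀ b ∈ Bk c k,
      ptB c (Lk c k) b ∈ Lam c ∧ win (ptB c (Lk c k) b) 0 (Lk c k) = b := by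
    intro b hb
    have h := exists_point hc hc2 hb
    unfold ptB
    rw [dif_pos h]
    exact ⟨h.choose_spec.1, h.choose_spec.2⟩
  have hinj : Set.InjOn (ptB c (Lk c k)) (Bk c k) := by
    intro b hb b' hb' heq
    rw [← (hspec b hb).2, ← (hspec b' hb').2, heq]
  have hdisj : ∀ z x, z ∈ ball x (dynEntourage shiftMap (UN 0) (Lk c k)) →
      win x 0 (Lk c k) = win z 0 (Lk c k) := by
    intro z x hz
    rw [mem_ball_dyn] at hz
    apply win_eq_iff.2
    intro j hj
    have := hz j hj 0 (by simp)
    simp only [shiftMap_iterate] at this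
    simpa using this
  refine ⟨⟨?_, ?_⟩, ?_⟩
  · intro x hx
    simp only [Finset.coe_image, Set.mem_image, Finset.mem_coe] at hx
    obtain ⟨b, hb, rfl⟩ := hx
    exact (hspec b hb).1
  · rintro x hx y hy hxy
    simp only [Finset.coe_image, Set.mem_image, Finset.mem_coe] at hx hy
    obtain ⟨b, hb, rfl⟩ := hx
    obtain ⟨b', hb', rfl⟩ := hy
    apply Set.disjoint_left.2
    intro z hz1 hz2
    apply hxy
    have hbb : b = b' := by
      rw [← (hspec b hb).2, ← (hspec b' hb').2, hdisj z _ hz1, hdisj z _ hz2]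
    rw [hbb]
  · rw [Finset.card_image_of_injOn hinj, Bk_card hc hc2]

lemma entropy_lower (hc : 0 < c) (hc2 : c < Real.log 2) :
    (c : EReal) ≤ netEntropy shiftMap (Lam c) := by
  have hlow : (c : EReal) ≤ netEntropyEntourage shiftMap (Lam c) (UN 0) := by
    rw [netEntropyEntourage]
    apply Filter.le_limsup_of_frequently_le _ (by isBoundedDefault)
    rw [Filter.frequently_atTop]
    intro a
    refine ⟨Lk c a, by have := Lk_ge hc hc2 a; omega, ?_⟩
    obtain ⟨hnet, hcard⟩ := net_lemma hc hc2 a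
    have hmax : ((sk c a : ℕ∞)) ≤ netMaxcard shiftMap (Lam c) (UN 0) (Lk c a) := by
      have := hnet.card_le_netMaxcard
      rwa [hcard] at this
    have hL := Lk_pos hc hc2 a
    have hs := sk_two hc hc2 a
    have hlog : ((Real.log (sk c a) : ℝ) : EReal)
        ≤ ENNReal.log ((netMaxcard shiftMap (Lam c) (UN 0) (Lk c a) : ℕ∞) : ENNReal) := by
      rw [← elog_natCast (sk c a) (by omega)]
      apply ENNReal.log_monotone
      have := ENat.toENNReal_le.2 hmax
      simpa using this
    calc (c : EReal) ≤ ((Real.log (sk c a) / Lk c a : ℝ) : EReal) := by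
          exact_mod_cast (hk_gt hc hc2 a).le
      _ = ((Real.log (sk c a) : ℝ) : EReal) / ((Lk c a : ℕ) : EReal) :=
          (ediv_nat _ _).symm
      _ ≤ ENNReal.log ((netMaxcard shiftMap (Lam c) (UN 0) (Lk c a) : ℕ∞) : ENNReal)
            / ((Lk c a : ℕ) : EReal) :=
          EReal.div_le_div_right_of_nonneg (by exact_mod_cast Nat.zero_le _) hlog
  refine le_trans hlow ?_
  rw [netEntropy]
  exact le_iSup₂ (f := fun U (_ : U ∈ 𝓤 (ℤ → Bool)) =>
    netEntropyEntourage shiftMap (Lam c) U) (UN 0) (UN_mem_uniformity 0)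

lemma entropy_eq (hc : 0 < c) (hc2 : c < Real.log 2) :
    netEntropy shiftMap (Lam c) = (c : EReal) :=
  le_antisymm (entropy_upper hc hc2) (entropy_lower hc hc2)

end Grillen

/-- There is a family `{Λ_c}_{c ∈ (0, log 2)}` of pairwise disjoint minimal sets for the
full shift on two symbols with `h(σ, Λ_c) = c` for each `c`; in particular, an uncountable
family of pairwise disjoint minimal sets of positive topological entropy. -/
theorem exists_uncountable_family_of_disjoint_minimal_sets_of_shift :
    ∃ Λ : ℝ → Set (ℤ → Bool),
      (∀ c ∈ Set.Ioo (0 : ℝ) (Real.log 2),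
        IsMinimalSet shiftMap (Λ c) ∧ netEntropy shiftMap (Λ c) = (c : EReal)) ∧
      (∀ c ∈ Set.Ioo (0 : ℝ) (Real.log 2), ∀ c' ∈ Set.Ioo (0 : ℝ) (Real.log 2),
        c ≠ c' → Λ c ∩ Λ c' = ∅) := by
  refine ⟨Grillen.Lam, fun c hc => ⟨Grillen.Lam_minimal hc.1 hc.2, Grillen.entropy_eq hc.1 hc.2⟩,
    fun c hc c' hc' hne => ?_⟩
  by_contra h
  have hinter : (Grillen.Lam c ∩ Grillen.Lam c').Nonempty := Set.nonempty_iff_ne_empty.2 h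
  have hmin := Grillen.Lam_minimal hc.1 hc.2
  have hmin' := Grillen.Lam_minimal hc'.1 hc'.2
  have hcompact : IsCompact (Grillen.Lam c ∩ Grillen.Lam c') :=
    hmin.2.1.inter_right hmin'.2.1.isClosed
  have hinj : Function.Injective shiftMap := by
    intro x y hxy
    funext n
    have := congrFun hxy (n - 1)
    simpa [shiftMap] using this
  have hinv : shiftMap '' (Grillen.Lam c ∩ Grillen.Lam c') =
      Grillen.Lam c ∩ Grillen.Lam c' := by
    rw [Set.image_inter hinj, hmin.2.2.1, hmin'.2.2.1]
  have h1 := hmin.2.2.2 _ Set.inter_subset_left hinter hcompact hinv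
  have h2 := hmin'.2.2.2 _ Set.inter_subset_right hinter hcompact hinv
  have : Grillen.Lam c = Grillen.Lam c' := h1.symm.trans h2
  have := (Grillen.entropy_eq hc.1 hc.2).symm.trans
    (this ▸ Grillen.entropy_eq hc'.1 hc'.2)
  exact hne (by exact_mod_cast this)
end

section
/- Let Σ = {0,1}^ℤ be the full shift on two symbols with shift map σ, and let A ⊂ Σ be a countable set. Then there exists a minimal set Λ* for σ with positive topological entropy such that Λ* ∩ A = ∅. -/
open Dynamics

namespace ShiftProof

def wnd (x : ℤ → Bool) (a : ℤ) (n : ℕ) : List Bool := List.ofFn fun i : Fin n => x (a + i)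

@[simp] lemma wnd_length (x : ℤ → Bool) (a : ℤ) (n : ℕ) : (wnd x a n).length = n := by
  simp [wnd]

lemma wnd_getElem (x : ℤ → Bool) (a : ℤ) (n i : ℕ) (h : i < n) :
    (wnd x a n)[i]'(by simpa using h) = x (a + i) := by
  simp [wnd]

lemma wnd_take (x : ℤ → Bool) (a : ℤ) (n m : ℕ) (h : m ≤ n) :
    (wnd x a n).take m = wnd x a m := by
  apply List.ext_getElem (by simp [h])
  intro i h1 h2
  simp only [List.getElem_take]
  simp only [wnd_length] at h1 h2
  rw [wnd_getElem _ _ _ _ (by omega), wnd_getElem _ _ _ _ (by omega)]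

lemma wnd_drop (x : ℤ → Bool) (a : ℤ) (n m : ℕ) :
    (wnd x a n).drop m = wnd x (a + m) (n - m) := by
  apply List.ext_getElem (by simp)
  intro i h1 h2
  simp only [List.getElem_drop]
  simp only [wnd_length, List.length_drop] at h1 h2
  rw [wnd_getElem _ _ _ _ (by omega), wnd_getElem _ _ _ _ (by omega)]
  congr 1; push_cast; ring

lemma infix_wnd {u : List Bool} {x : ℤ → Bool} {a : ℤ} {n : ℕ} (h : u <:+: wnd x a n) :
    ∃ b : ℤ, u = wnd x b u.length := by
  obtain ⟨s, t, hst⟩ := h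
  refine ⟨a + s.length, ?_⟩
  have hlen : s.length + u.length + t.length = n := by
    have := congrArg List.length hst
    simp at this
    omega
  have h1 : (wnd x a n).drop s.length = u ++ t := by
    rw [← hst, List.append_assoc, List.drop_left]
  have h2 : u = ((wnd x a n).drop s.length).take u.length := by
    rw [h1, List.take_left]
  rw [wnd_drop] at h2
  conv_lhs => rw [h2]
  exact wnd_take _ _ _ _ (by omega)

end ShiftProof

namespace ShiftProof

lemma infix_join_pair {l : ℕ} :
    ∀ (bs : List (List Bool)), (∀ b ∈ bs, b.length = l) → bs ≠ [] →
    ∀ u : List Bool, u.length ≤ l → u <:+: bs.flatten →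
    ∃ w ∈ bs, ∃ w' ∈ bs, u <:+: w ++ w' := by
  intro bs
  induction bs with
  | nil => intro _ h; exact absurd rfl h
  | cons b rest ih =>
    intro hlen _ u hu hinf
    rcases eq_or_ne u [] with rfl | hune
    · exact ⟨b, List.mem_cons_self, b, List.mem_cons_self, List.nil_infix⟩
    obtain ⟨s, t, hst⟩ := hinf
    simp only [List.flatten_cons] at hst
    have hb : b.length = l := hlen b (List.mem_cons_self)
    by_cases hs : l ≤ s.length
    · -- b is a prefix of s
      have hspre : s <+: b ++ rest.flatten := ⟨u ++ t, by simpa [List.append_assoc] using hst⟩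
      have hbpre : b <+: s :=
        List.prefix_of_prefix_length_le (List.prefix_append _ _) hspre (by omega)
      obtain ⟨s', rfl⟩ := hbpre
      have hst' : s' ++ u ++ t = rest.flatten := by
        apply List.append_cancel_left (as := b)
        simpa [List.append_assoc] using hst
      have hrestne : rest ≠ [] := by
        rintro rfl
        simp at hst'
        exact hune hst'.2.1
      obtain ⟨w, hw, w', hw', huw⟩ := ih (fun c hc => hlen c (List.mem_cons_of_mem _ hc))
        hrestne u hu ⟨s', t, hst'⟩
      exact ⟨w, List.mem_cons_of_mem _ hw, w', List.mem_cons_of_mem _ hw', huw⟩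
    · push_neg at hs
      rcases rest with _ | ⟨r, rest'⟩
      · -- join = b
        have : u <:+: b := ⟨s, t, by simpa [List.append_assoc] using hst⟩
        exact ⟨b, List.mem_cons_self, b, List.mem_cons_self,
          this.trans (List.prefix_append _ _).isInfix⟩
      · have hr : r.length = l := hlen r (by simp)
        have hsu : s ++ u <+: b ++ r ++ rest'.flatten := by
          refine ⟨t, ?_⟩
          simpa [List.append_assoc] using hst
        have hbr : b ++ r <+: b ++ r ++ rest'.flatten := List.prefix_append _ _
        have h2 : s ++ u <+: b ++ r := by
          apply List.prefix_of_prefix_length_le hsu hbr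
          simp; omega
        have : u <:+: b ++ r := ((List.suffix_append s u).isInfix).trans h2.isInfix
        exact ⟨b, List.mem_cons_self, r, by simp, this⟩

lemma infix_join_block {l : ℕ} (hl : 1 ≤ l) :
    ∀ (bs : List (List Bool)), (∀ b ∈ bs, b.length = l) →
    ∀ u : List Bool, 2 * l ≤ u.length → u <:+: bs.flatten →
    ∃ b ∈ bs, b <:+: u := by
  intro bs
  induction bs with
  | nil =>
    intro _ u hu hinf
    have hu0 : u = [] := by
      have := hinf.length_le
      simp only [List.flatten_nil, List.length_nil, Nat.le_zero, List.length_eq_zero_iff] at this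
      exact this
    subst hu0
    simp at hu
    omega
  | cons b rest ih =>
    intro hlen u hu hinf
    obtain ⟨s, t, hst⟩ := hinf
    simp only [List.flatten_cons] at hst
    have hb : b.length = l := hlen b (List.mem_cons_self)
    by_cases hs : l ≤ s.length
    · have hspre : s <+: b ++ rest.flatten := ⟨u ++ t, by simpa [List.append_assoc] using hst⟩
      have hbpre : b <+: s :=
        List.prefix_of_prefix_length_le (List.prefix_append _ _) hspre (by omega)
      obtain ⟨s', rfl⟩ := hbpre
      have hst' : s' ++ u ++ t = rest.flatten := by
        apply List.append_cancel_left (as := b)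
        simpa [List.append_assoc] using hst
      obtain ⟨w, hw, hbw⟩ := ih (fun c hc => hlen c (List.mem_cons_of_mem _ hc)) u hu ⟨s', t, hst'⟩
      exact ⟨w, List.mem_cons_of_mem _ hw, hbw⟩
    · push_neg at hs
      rcases rest with _ | ⟨r, rest'⟩
      · exfalso
        have := congrArg List.length hst
        simp at this
        omega
      · have hr : r.length = l := hlen r (by simp)
        refine ⟨r, by simp, ?_⟩
        have hst2 : s ++ (u ++ t) = b ++ (r ++ rest'.flatten) := by
          simpa [List.append_assoc] using hst
        have hL : (s ++ (u ++ t)).drop l = u.drop (l - s.length) ++ t := by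
          rw [List.drop_append, List.drop_eq_nil_of_le (by omega),
            List.drop_append]
          have ht0 : l - s.length - u.length = 0 := by omega
          rw [ht0, List.drop_zero, List.nil_append]
        have hR : (b ++ (r ++ rest'.flatten)).drop l = r ++ rest'.flatten := by
          rw [List.drop_append, List.drop_eq_nil_of_le (by omega)]
          have hd0 : l - b.length = 0 := by omega
          rw [hd0, List.drop_zero, List.nil_append]
        have hdrop : u.drop (l - s.length) ++ t = r ++ rest'.flatten := by
          rw [← hL, ← hR, hst2]
        have h1 : u.drop (l - s.length) <+: r ++ rest'.flatten := ⟨t, hdrop⟩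
        have h2 : r <+: u.drop (l - s.length) := by
          apply List.prefix_of_prefix_length_le (List.prefix_append _ _) h1
          rw [List.length_drop]; omega
        exact h2.isInfix.trans (List.drop_suffix _ _).isInfix

end ShiftProof

namespace ShiftProof

lemma length_join_ofFn {l n : ℕ} (f : Fin n → List Bool) (hf : ∀ i, (f i).length = l) :
    (List.ofFn f).flatten.length = n * l := by
  rw [List.length_flatten]
  have : (List.ofFn f).map List.length = List.replicate n l := by
    rw [List.map_ofFn]
    have : (List.length ∘ f) = fun _ => l := funext fun i => hf i
    rw [this, List.ofFn_const]
  rw [this, List.sum_replicate, smul_eq_mul]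

lemma join_ofFn_inj {l : ℕ} : ∀ {n : ℕ} (f g : Fin n → List Bool),
    (∀ i, (f i).length = l) → (∀ i, (g i).length = l) →
    (List.ofFn f).flatten = (List.ofFn g).flatten → f = g := by
  intro n
  induction n with
  | zero => intro f g _ _ _; funext i; exact absurd i.2 (Nat.not_lt_zero _)
  | succ n ih =>
    intro f g hf hg h
    rw [List.ofFn_succ, List.ofFn_succ, List.flatten_cons, List.flatten_cons] at h
    obtain ⟨h1, h2⟩ := List.append_inj h (by rw [hf 0, hg 0])
    have := ih (fun i => f i.succ) (fun i => g i.succ) (fun i => hf i.succ) (fun i => hg i.succ) h2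
    funext i
    refine Fin.cases ?_ ?_ i
    · exact h1
    · intro j; exact congrFun this j

lemma mem_join_decomp {S : List Bool → Prop} : ∀ (cs : List (List Bool)),
    (∀ c ∈ cs, ∃ bs : List (List Bool), (∀ b ∈ bs, S b) ∧ c = bs.flatten) →
    ∃ bs : List (List Bool), (∀ b ∈ bs, S b) ∧ cs.flatten = bs.flatten := by
  intro cs
  induction cs with
  | nil => exact fun _ => ⟨[], by simp, rfl⟩
  | cons c rest ih =>
    intro h
    obtain ⟨bs1, hbs1, hc⟩ := h c (by simp)
    obtain ⟨bs2, hbs2, hrest⟩ := ih (fun c hc => h c (List.mem_cons_of_mem _ hc))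
    refine ⟨bs1 ++ bs2, ?_, ?_⟩
    · intro b hb
      rcases List.mem_append.1 hb with hb | hb
      · exact hbs1 b hb
      · exact hbs2 b hb
    · rw [List.flatten_cons, List.flatten_append, hc, hrest]

lemma two_pow_big : ∀ n : ℕ, 20 ≤ n → 3 * n ^ 2 ≤ 2 ^ (n - 1) := by
  have key : ∀ k : ℕ, 3 * (20 + k) ^ 2 ≤ 2 ^ (19 + k) := by
    intro k
    induction k with
    | zero => norm_num
    | succ k ih =>
      have h1 : 3 * (20 + (k+1)) ^ 2 = 3 * (20 + k)^2 + (6 * (20 + k) + 3) := by ring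
      have h2 : 6 * (20 + k) + 3 ≤ 3 * (20 + k)^2 := by nlinarith
      have h3 : (2:ℕ) ^ (19 + (k+1)) = 2 ^ (19+k) + 2 ^ (19+k) := by ring
      omega
  intro n hn
  have := key (n - 20)
  have h20 : 20 + (n - 20) = n := by omega
  have h19 : 19 + (n - 20) = n - 1 := by omega
  rw [h20, h19] at this
  exact this

end ShiftProof

namespace ShiftProof

structure GoodData where
  W : Finset (List Bool)
  l : ℕ
  m : ℕ

def InvD (d : GoodData) : Prop :=
  (∀ w ∈ d.W, w.length = d.l) ∧ 2 ^ d.m ≤ d.W.card ∧ 2 * d.l + 1 ≤ 3 * d.m ∧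
    2 * d.l ≤ 2 ^ d.m ∧ 1 ≤ d.m ∧ 1 ≤ d.l

def Ld (d : GoodData) : ℕ := 4 * d.l * d.W.card ^ 2 + 4

noncomputable def Pd (d : GoodData) : List Bool := ((d.W ×ˢ d.W).toList.map fun q => q.1 ++ q.2).flatten

noncomputable def ld' (d : GoodData) : ℕ := (Pd d).length + Ld d * d.l

noncomputable def Cd (d : GoodData) : Finset (List Bool) :=
  Finset.image (fun f : Fin (Ld d) → {w // w ∈ d.W} =>
    Pd d ++ (List.ofFn fun i => (f i : List Bool)).flatten) Finset.univ

noncomputable def badd (a : ℤ → Bool) (d : GoodData) : Finset (List Bool) :=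
  Finset.image (fun i : Fin (ld' d + 1) =>
    ((wnd a 0 (2 * ld' d)).drop i).take (ld' d)) Finset.univ

noncomputable def stepD (a : ℤ → Bool) (d : GoodData) : GoodData :=
  ⟨Cd d \ badd a d, ld' d, d.m * Ld d - 1⟩

lemma Pd_length {d : GoodData} (hlen : ∀ w ∈ d.W, w.length = d.l) :
    (Pd d).length = 2 * d.l * d.W.card ^ 2 := by
  rw [Pd, List.length_flatten, List.map_map]
  have h : ∀ x ∈ (d.W ×ˢ d.W).toList.map (List.length ∘ fun q => q.1 ++ q.2), x = 2 * d.l := by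
    intro x hx
    obtain ⟨q, hq, rfl⟩ := List.mem_map.1 hx
    rw [Finset.mem_toList, Finset.mem_product] at hq
    simp only [Function.comp_apply, List.length_append]
    rw [hlen _ hq.1, hlen _ hq.2]
    ring
  rw [List.sum_eq_card_nsmul _ _ h, List.length_map, Finset.length_toList, smul_eq_mul,
    Finset.card_product]
  ring

lemma pair_infix_Pd {d : GoodData} {w w' : List Bool} (hw : w ∈ d.W) (hw' : w' ∈ d.W) :
    w ++ w' <:+: Pd d :=
  List.infix_of_mem_flatten (List.mem_map.2 ⟨(w, w'),
    Finset.mem_toList.2 (Finset.mem_product.2 ⟨hw, hw'⟩), rfl⟩)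

lemma Pd_decomp (d : GoodData) :
    ∃ bs : List (List Bool), (∀ b ∈ bs, b ∈ d.W) ∧ Pd d = bs.flatten := by
  refine ⟨(d.W ×ˢ d.W).toList.flatMap fun q => [q.1, q.2], ?_, ?_⟩
  · intro b hb
    rw [List.mem_flatMap] at hb
    obtain ⟨q, hq, hb⟩ := hb
    rw [Finset.mem_toList, Finset.mem_product] at hq
    simp only [List.mem_cons, List.not_mem_nil, or_false] at hb
    rcases hb with rfl | rfl
    · exact hq.1
    · exact hq.2
  · rw [Pd]
    generalize (d.W ×ˢ d.W).toList = L
    induction L with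
    | nil => rfl
    | cons q rest ih => simp [ih, List.append_assoc]

lemma mem_Cd {d : GoodData} {v : List Bool} (hv : v ∈ Cd d) :
    ∃ f : Fin (Ld d) → {w // w ∈ d.W},
      v = Pd d ++ (List.ofFn fun i => (f i : List Bool)).flatten := by
  obtain ⟨f, _, rfl⟩ := Finset.mem_image.1 hv
  exact ⟨f, rfl⟩

lemma Cd_length {d : GoodData} (hlen : ∀ w ∈ d.W, w.length = d.l) {v : List Bool}
    (hv : v ∈ Cd d) : v.length = ld' d := by
  obtain ⟨f, rfl⟩ := mem_Cd hv
  rw [List.length_append, length_join_ofFn (fun i => (f i : List Bool))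
    (fun i => hlen _ (f i).2), ld']

lemma Cd_card {d : GoodData} (hlen : ∀ w ∈ d.W, w.length = d.l) (hl : 1 ≤ d.l) :
    (Cd d).card = d.W.card ^ Ld d := by
  rw [Cd, Finset.card_image_of_injective _ ?_, Finset.card_univ, Fintype.card_fun,
    Fintype.card_coe, Fintype.card_fin]
  intro f g hfg
  have h2 := List.append_cancel_left hfg
  have := join_ofFn_inj (l := d.l) (fun i => ((f i : List Bool)))
    (fun i => ((g i : List Bool))) (fun i => hlen _ (f i).2) (fun i => hlen _ (g i).2) h2
  funext i
  exact Subtype.ext (congrFun this i)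

lemma badd_card (a : ℤ → Bool) (d : GoodData) : (badd a d).card ≤ ld' d + 1 := by
  calc (badd a d).card ≤ (Finset.univ : Finset (Fin (ld' d + 1))).card := Finset.card_image_le
  _ = ld' d + 1 := by simp

lemma arith1 (l m N2 : ℕ) (h3m : 2*l+1 ≤ 3*m) (hm : 1 ≤ m) :
    2 * (2*l*N2 + (4*l*N2+4) * l) + 1 ≤ 3 * (m * (4*l*N2+4) - 1) := by
  have key : (2*l+1) * (4*l*N2+4) ≤ 3*m*(4*l*N2+4) := Nat.mul_le_mul_right _ h3m
  have key' : 2 * (2*l*N2 + (4*l*N2+4) * l) + 4 ≤ 3 * (m * (4*l*N2+4)) := by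
    have hid : (2*l+1) * (4*l*N2+4) = 2*(2*l*N2 + (4*l*N2+4)*l) + 4 := by ring
    have hid2 : 3*m*(4*l*N2+4) = 3 * (m * (4*l*N2+4)) := by ring
    rw [hid, hid2] at key
    exact key
  have h1 : 1 ≤ m * (4*l*N2+4) := Nat.one_le_iff_ne_zero.2 (by positivity)
  omega

theorem stepD_spec (a : ℤ → Bool) (d : GoodData) (hd : InvD d) :
    InvD (stepD a d) ∧
    (∀ v ∈ (stepD a d).W,
      (∃ bs : List (List Bool), (∀ b ∈ bs, b ∈ d.W) ∧ v = bs.flatten) ∧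
      (∀ w ∈ d.W, ∀ w' ∈ d.W, w ++ w' <:+: v) ∧
      ¬ v <:+: wnd a 0 (2 * (stepD a d).l)) ∧
    2 * d.l ≤ (stepD a d).l := by
  obtain ⟨hlen, hcard, h3m, h2l, hm1, hl1⟩ := hd
  have hN2 : 2 ≤ d.W.card := le_trans (by
    calc 2 = 2^1 := (pow_one 2).symm
    _ ≤ 2^d.m := Nat.pow_le_pow_right (by norm_num) hm1) hcard
  have hPlen : (Pd d).length = 2 * d.l * d.W.card ^ 2 := Pd_length hlen
  have hL20 : 20 ≤ Ld d := by
    have : 4 ≤ d.W.card ^ 2 := by nlinarith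
    rw [Ld]; nlinarith
  have hld' : ld' d = 2 * d.l * d.W.card ^ 2 + Ld d * d.l := by rw [ld', hPlen]
  have hlle : d.l ≤ Ld d := by rw [Ld]; nlinarith
  have hld'_le : 2 * ld' d ≤ 3 * Ld d ^ 2 := by
    have h1 : 2 * d.l * d.W.card ^ 2 ≤ Ld d := by rw [Ld]; nlinarith
    have h2 : 2 * (Ld d * d.l) ≤ 2 * (Ld d * Ld d) :=
      Nat.mul_le_mul_left 2 (Nat.mul_le_mul_left _ hlle)
    have h3 : 2 * Ld d + 2 * (Ld d * Ld d) ≤ 3 * Ld d ^ 2 := by nlinarith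
    rw [hld']
    omega
  -- key : 2 * ld' d ≤ 2 ^ (m' )
  have hm' : (stepD a d).m = d.m * Ld d - 1 := rfl
  have hmL : 20 ≤ d.m * Ld d := le_trans hL20 (Nat.le_mul_of_pos_left _ hm1)
  have hpow2 : 2 * ld' d ≤ 2 ^ (d.m * Ld d - 1) := by
    calc 2 * ld' d ≤ 3 * Ld d ^ 2 := hld'_le
    _ ≤ 2 ^ (Ld d - 1) := two_pow_big _ hL20
    _ ≤ 2 ^ (d.m * Ld d - 1) := Nat.pow_le_pow_right (by norm_num)
        (by have := Nat.le_mul_of_pos_left (Ld d) hm1; omega)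
  have hcard' : 2 ^ (d.m * Ld d - 1) ≤ (Cd d \ badd a d).card := by
    have h1 : (Cd d).card = d.W.card ^ Ld d := Cd_card hlen hl1
    have h2 : (2:ℕ) ^ (d.m * Ld d) ≤ d.W.card ^ Ld d := by
      calc (2:ℕ) ^ (d.m * Ld d) = (2 ^ d.m) ^ Ld d := by rw [← pow_mul]
      _ ≤ d.W.card ^ Ld d := Nat.pow_le_pow_left hcard _
    have h3 : (Cd d).card ≤ (Cd d \ badd a d).card + (badd a d).card :=
      Finset.card_le_card_sdiff_add_card
    have h4 := badd_card a d
    have h5 : 2 ^ (d.m * Ld d) = 2 ^ (d.m * Ld d - 1) + 2 ^ (d.m * Ld d - 1) := by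
      have hh : d.m * Ld d = (d.m * Ld d - 1) + 1 := by omega
      conv_lhs => rw [hh]
      rw [pow_succ]
      ring
    have h6 : ld' d + 1 ≤ 2 ^ (d.m * Ld d - 1) := by
      have : 1 ≤ ld' d := by rw [hld', Ld]; nlinarith
      omega
    omega
  refine ⟨⟨?_, ?_, ?_, ?_, ?_, ?_⟩, ?_, ?_⟩
  · -- lengths
    intro v hv
    exact Cd_length hlen (Finset.mem_sdiff.1 hv).1
  · exact hcard'
  · -- 2l' + 1 ≤ 3m'
    show 2 * ld' d + 1 ≤ 3 * (d.m * Ld d - 1)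
    rw [hld', Ld]
    exact arith1 d.l d.m (d.W.card ^ 2) h3m hm1
  · -- 2l' ≤ 2^m'
    exact hpow2
  · -- 1 ≤ m'
    show 1 ≤ d.m * Ld d - 1
    omega
  · -- 1 ≤ l'
    show 1 ≤ ld' d
    rw [hld', Ld]; nlinarith
  · -- structural facts
    intro v hv
    rw [stepD, Finset.mem_sdiff] at hv
    obtain ⟨hvC, hvbad⟩ := hv
    obtain ⟨f, hf⟩ := mem_Cd hvC
    have hvlen : v.length = ld' d := Cd_length hlen hvC
    refine ⟨?_, ?_, ?_⟩
    · -- decomposition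
      obtain ⟨bs1, hbs1, hP⟩ := Pd_decomp d
      refine ⟨bs1 ++ (List.ofFn fun i => ((f i : List Bool))), ?_, ?_⟩
      · intro b hb
        rcases List.mem_append.1 hb with hb | hb
        · exact hbs1 b hb
        · simp only [List.mem_ofFn] at hb
          obtain ⟨i, rfl⟩ := hb
          exact (f i).2
      · rw [hf, List.flatten_append, hP]
    · -- pairs
      intro w hw w' hw'
      refine (pair_infix_Pd hw hw').trans ?_
      rw [hf]
      exact (List.prefix_append _ _).isInfix
    · -- not infix of the bad window
      intro hinf
      apply hvbad
      obtain ⟨s, t, hst⟩ := hinf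
      have hwl : (wnd a 0 (2 * (stepD a d).l)).length = 2 * ld' d := by
        rw [wnd_length]; rfl
      have hslen : s.length ≤ ld' d := by
        have := congrArg List.length hst
        simp only [List.length_append, hwl] at this
        omega
      rw [badd, Finset.mem_image]
      refine ⟨⟨s.length, by omega⟩, Finset.mem_univ _, ?_⟩
      have h1 : (wnd a 0 (2 * ld' d)).drop s.length = v ++ t := by
        have : wnd a 0 (2 * (stepD a d).l) = wnd a 0 (2 * ld' d) := rfl
        rw [← this, ← hst, List.append_assoc, List.drop_left]
      rw [h1, ← hvlen, List.take_left]
  · -- growth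
    show 2 * d.l ≤ ld' d
    have h5 : Ld d * d.l = 4*d.l*d.W.card^2*d.l + 4*d.l := by rw [Ld]; ring
    rw [hld']
    omega

end ShiftProof

namespace ShiftProof

variable (aseq : ℕ → ℤ → Bool)

noncomputable def seqD : ℕ → GoodData
  | 0 => ⟨{[false], [true]}, 1, 1⟩
  | k+1 => stepD (aseq k) (seqD k)

lemma invD_seq : ∀ k, InvD (seqD aseq k) := by
  intro k
  induction k with
  | zero =>
    refine ⟨?_, ?_, ?_, ?_, ?_, ?_⟩
    · intro w hw
      simp only [seqD] at hw ⊢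
      fin_cases hw <;> rfl
    · show 2^1 ≤ ({[false], [true]} : Finset (List Bool)).card
      simp
    · show 2 * (seqD aseq 0).l + 1 ≤ 3 * (seqD aseq 0).m
      show 2 * 1 + 1 ≤ 3 * 1
      norm_num
    · show 2 * 1 ≤ 2^1
      norm_num
    · exact le_refl 1
    · exact le_refl 1
  | succ k ih => exact (stepD_spec (aseq k) (seqD aseq k) ih).1

lemma rel_seq (k : ℕ) : ∀ v ∈ (seqD aseq (k+1)).W,
    (∃ bs : List (List Bool), (∀ b ∈ bs, b ∈ (seqD aseq k).W) ∧ v = bs.flatten) ∧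
    (∀ w ∈ (seqD aseq k).W, ∀ w' ∈ (seqD aseq k).W, w ++ w' <:+: v) ∧
    ¬ v <:+: wnd (aseq k) 0 (2 * (seqD aseq (k+1)).l) :=
  (stepD_spec (aseq k) (seqD aseq k) (invD_seq aseq k)).2.1

lemma l_grow (k : ℕ) : 2 * (seqD aseq k).l ≤ (seqD aseq (k+1)).l :=
  (stepD_spec (aseq k) (seqD aseq k) (invD_seq aseq k)).2.2

lemma l_pos (k : ℕ) : 1 ≤ (seqD aseq k).l := (invD_seq aseq k).2.2.2.2.2

lemma l_mono : ∀ {k j : ℕ}, k ≤ j → (seqD aseq k).l ≤ (seqD aseq j).l := by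
  intro k j h
  induction j with
  | zero =>
    have hk : k = 0 := Nat.le_zero.1 h
    subst hk
    exact le_refl _
  | succ j ih =>
    rcases Nat.lt_succ_iff_lt_or_eq.1 (Nat.lt_succ_of_le h) with h' | h'
    · have h2 := l_grow aseq j
      have h3 := ih (by omega)
      omega
    · exact h' ▸ le_refl _

lemma l_ge (k : ℕ) : k + 1 ≤ (seqD aseq k).l := by
  induction k with
  | zero => exact l_pos aseq 0
  | succ k ih =>
    have := l_grow aseq k
    omega

lemma W_nonempty (k : ℕ) : (seqD aseq k).W.Nonempty := by
  apply Finset.card_pos.1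
  have h := (invD_seq aseq k).2.1
  have hm := (invD_seq aseq k).2.2.2.2.1
  have : 1 ≤ 2 ^ (seqD aseq k).m := Nat.one_le_two_pow
  omega

lemma W_length {k : ℕ} {w : List Bool} (hw : w ∈ (seqD aseq k).W) :
    w.length = (seqD aseq k).l := (invD_seq aseq k).1 w hw

lemma decomp_trans : ∀ j k : ℕ, k < j → ∀ v ∈ (seqD aseq j).W,
    ∃ bs : List (List Bool), (∀ b ∈ bs, b ∈ (seqD aseq k).W) ∧ v = bs.flatten := by
  intro j
  induction j with
  | zero => intro k h; omega
  | succ j ih =>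
    intro k h v hv
    rcases Nat.lt_succ_iff_lt_or_eq.1 h with h' | h'
    · obtain ⟨cs, hcs, rfl⟩ := (rel_seq aseq j v hv).1
      obtain ⟨bs, hbs, hflat⟩ := mem_join_decomp (S := fun b => b ∈ (seqD aseq k).W) cs
        (fun c hc => ih k h' c (hcs c hc))
      exact ⟨bs, hbs, hflat⟩
    · subst h'
      exact (rel_seq aseq k v hv).1

lemma chain_infix : ∀ j k : ℕ, k < j → ∀ w ∈ (seqD aseq k).W, ∀ v ∈ (seqD aseq j).W,
    w <:+: v := by
  intro j
  induction j with
  | zero => intro k h; omega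
  | succ j ih =>
    intro k h w hw v hv
    rcases Nat.lt_succ_iff_lt_or_eq.1 h with h' | h'
    · obtain ⟨u, hu⟩ := W_nonempty aseq j
      exact (ih k h' w hw u hu).trans
        (((List.prefix_append u u).isInfix).trans ((rel_seq aseq j v hv).2.1 u hu u hu))
    · subst h'
      exact ((List.prefix_append w w).isInfix).trans ((rel_seq aseq k v hv).2.1 w hw w hw)

def LangS : Set (List Bool) := {u | ∃ k, ∃ v ∈ (seqD aseq k).W, u <:+: v}

def XS : Set (ℤ → Bool) := {x | ∀ (a : ℤ) (n : ℕ), wnd x a n ∈ LangS aseq}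

lemma LangS_infix_closed {u u' : List Bool} (h : u' <:+: u) (hu : u ∈ LangS aseq) :
    u' ∈ LangS aseq := by
  obtain ⟨k, v, hv, huv⟩ := hu
  exact ⟨k, v, hv, h.trans huv⟩

lemma occBlock {x : ℤ → Bool} (hx : x ∈ XS aseq) (k : ℕ) (a : ℤ) :
    ∃ v ∈ (seqD aseq k).W, v <:+: wnd x a (2 * (seqD aseq k).l) := by
  obtain ⟨j, v0, hv0, hinf⟩ := hx a (2 * (seqD aseq k).l)
  have hlen : (wnd x a (2 * (seqD aseq k).l)).length = 2 * (seqD aseq k).l := wnd_length _ _ _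
  have hv0len : v0.length = (seqD aseq j).l := W_length aseq hv0
  have hkj : k < j := by
    by_contra h
    push_neg at h
    have h1 := l_mono aseq h
    have h2 := hinf.length_le
    have h3 := l_pos aseq k
    omega
  obtain ⟨bs, hbs, rfl⟩ := decomp_trans aseq j k hkj v0 hv0
  obtain ⟨b, hb, hbinf⟩ := infix_join_block (l_pos aseq k) bs
    (fun b hb => W_length aseq (hbs b hb)) _ (le_of_eq hlen.symm) hinf
  exact ⟨b, hbs b hb, hbinf⟩

lemma lang_in_all {u : List Bool} {k : ℕ} (hu : u ∈ LangS aseq)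
    (hlen : u.length ≤ (seqD aseq k).l) :
    ∀ v ∈ (seqD aseq (k+2)).W, u <:+: v := by
  obtain ⟨j, v0, hv0, hinf⟩ := hu
  intro v hv
  by_cases hj : j ≤ k + 1
  · exact hinf.trans (chain_infix aseq (k+2) j (by omega) v0 hv0 v hv)
  · push_neg at hj
    have hkj : k < j := by omega
    obtain ⟨bs, hbs, rfl⟩ := decomp_trans aseq j k hkj v0 hv0
    have hne : bs ≠ [] := by
      rintro rfl
      have h1 := W_length aseq hv0
      have h2 := l_pos aseq j
      simp only [List.flatten_nil, List.length_nil] at h1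
      omega
    obtain ⟨w, hw, w', hw', huww⟩ := infix_join_pair bs
      (fun b hb => W_length aseq (hbs b hb)) hne u hlen hinf
    have h1 : w ++ w' <:+: v := by
      obtain ⟨z, hz⟩ := W_nonempty aseq (k+1)
      exact ((rel_seq aseq k z hz).2.1 w (hbs w hw) w' (hbs w' hw')).trans
        (chain_infix aseq (k+2) (k+1) (by omega) z hz v hv)
    exact huww.trans h1

lemma occWindow {x : ℤ → Bool} (hx : x ∈ XS aseq) {u : List Bool} {k : ℕ}
    (hu : u ∈ LangS aseq) (hlen : u.length ≤ (seqD aseq k).l) :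
    ∃ b : ℤ, u = wnd x b u.length := by
  obtain ⟨v, hv, hvinf⟩ := occBlock aseq hx (k+2) 0
  have h1 : u <:+: v := lang_in_all aseq hu hlen v hv
  obtain ⟨b, hb⟩ := infix_wnd hvinf
  rw [hb] at h1
  obtain ⟨b', hb'⟩ := infix_wnd h1
  exact ⟨b', hb'⟩

end ShiftProof

namespace ShiftProof

def shiftZ (t : ℤ) (x : ℤ → Bool) : ℤ → Bool := fun n => x (n + t)

variable (aseq : ℕ → ℤ → Bool)

lemma wnd_shiftZ (t : ℤ) (x : ℤ → Bool) (a : ℤ) (n : ℕ) :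
    wnd (shiftZ t x) a n = wnd x (a + t) n := by
  apply List.ext_getElem (by simp)
  intro i h1 h2
  simp only [wnd_length] at h1 h2
  rw [wnd_getElem _ _ _ _ h1, wnd_getElem _ _ _ _ h1]
  show x (a + i + t) = x (a + t + i)
  congr 1
  ring

lemma shiftZ_mem_XS {x : ℤ → Bool} (hx : x ∈ XS aseq) (t : ℤ) : shiftZ t x ∈ XS aseq := by
  intro a n
  rw [wnd_shiftZ]
  exact hx (a + t) n

lemma shiftMap_eq_shiftZ (x : ℤ → Bool) : shiftMap x = shiftZ 1 x := rfl

lemma shiftMap_iterate (j : ℕ) (x : ℤ → Bool) : shiftMap^[j] x = shiftZ (j : ℤ) x := by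
  induction j generalizing x with
  | zero => funext n; simp [shiftZ]
  | succ j ih =>
    rw [Function.iterate_succ_apply, ih]
    funext n
    show (shiftMap x) (n + (j:ℤ)) = x (n + (j+1 : ℤ))
    show x (n + (j:ℤ) + 1) = x (n + ((j:ℤ)+1))
    congr 1
    ring

lemma shiftZ_shiftZ (s t : ℤ) (x : ℤ → Bool) : shiftZ s (shiftZ t x) = shiftZ (s + t) x := by
  funext n
  show x (n + s + t) = x (n + (s + t))
  congr 1
  ring

lemma XS_inv : shiftMap '' XS aseq = XS aseq := by
  apply Set.Subset.antisymm
  · rintro _ ⟨x, hx, rfl⟩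
    rw [shiftMap_eq_shiftZ]
    exact shiftZ_mem_XS aseq hx 1
  · intro x hx
    refine ⟨shiftZ (-1) x, shiftZ_mem_XS aseq hx (-1), ?_⟩
    rw [shiftMap_eq_shiftZ, shiftZ_shiftZ]
    funext n
    show x (n + 0) = x n
    congr 1
    ring

lemma invariant_shiftZ {Λ : Set (ℤ → Bool)} (hΛ : shiftMap '' Λ = Λ) {y : ℤ → Bool}
    (hy : y ∈ Λ) (t : ℤ) : shiftZ t y ∈ Λ := by
  have hfwd : ∀ z ∈ Λ, shiftZ 1 z ∈ Λ := by
    intro z hz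
    rw [← hΛ]
    exact ⟨z, hz, rfl⟩
  have hbwd : ∀ z ∈ Λ, shiftZ (-1) z ∈ Λ := by
    intro z hz
    rw [← hΛ] at hz
    obtain ⟨w, hw, hwz⟩ := hz
    have : shiftZ (-1) z = w := by
      rw [← hwz, shiftMap_eq_shiftZ, shiftZ_shiftZ]
      funext n
      show w (n + 0) = w n
      congr 1
      ring
    rw [this]
    exact hw
  induction t using Int.induction_on with
  | zero =>
    have h0 : shiftZ 0 y = y := by
      funext n
      show y (n + 0) = y n
      rw [add_zero]
    rw [h0]
    exact hy
  | succ i ih =>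
    have := hfwd _ ih
    rw [shiftZ_shiftZ] at this
    have he : (1 : ℤ) + i = i + 1 := by ring
    rw [he] at this
    exact this
  | pred i ih =>
    have := hbwd _ ih
    rw [shiftZ_shiftZ] at this
    have he : (-1 : ℤ) + -i = -i - 1 := by ring
    rw [he] at this
    exact this

lemma cylinder_open (a : ℤ) (n : ℕ) (u : Fin n → Bool) :
    IsOpen {x : ℤ → Bool | ∀ i : Fin n, x (a + i) = u i} := by
  have : {x : ℤ → Bool | ∀ i : Fin n, x (a + i) = u i} =
      ⋂ i : Fin n, (fun x : ℤ → Bool => x (a + i)) ⁻¹' {u i} := by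
    ext x
    simp [Set.mem_iInter]
  rw [this]
  exact isOpen_iInter_of_finite fun i =>
    (continuous_apply (a + (i:ℤ))).isOpen_preimage _ (isOpen_discrete _)

lemma wnd_eq_ofFn (x : ℤ → Bool) (a : ℤ) (n : ℕ) :
    wnd x a n = List.ofFn (fun i : Fin n => x (a + i)) := rfl

lemma window_set_closed (a : ℤ) (n : ℕ) :
    IsClosed {x : ℤ → Bool | wnd x a n ∈ LangS aseq} := by
  rw [← isOpen_compl_iff]
  have : {x : ℤ → Bool | wnd x a n ∈ LangS aseq}ᶜ =
      ⋃ (u : Fin n → Bool) (_ : List.ofFn u ∉ LangS aseq),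
        {x : ℤ → Bool | ∀ i : Fin n, x (a + i) = u i} := by
    ext x
    simp only [Set.mem_compl_iff, Set.mem_setOf_eq, Set.mem_iUnion]
    constructor
    · intro hx
      refine ⟨fun i => x (a + i), hx, fun i => rfl⟩
    · rintro ⟨u, hu, hxu⟩
      have : wnd x a n = List.ofFn u := by
        rw [wnd_eq_ofFn]
        exact congrArg List.ofFn (funext hxu)
      rw [this]
      exact hu
  rw [this]
  exact isOpen_iUnion fun u => isOpen_iUnion fun _ => cylinder_open a n u

lemma XS_closed : IsClosed (XS aseq) := by
  have : XS aseq = ⋂ (a : ℤ), ⋂ (n : ℕ), {x : ℤ → Bool | wnd x a n ∈ LangS aseq} := by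
    ext x
    simp only [XS, Set.mem_setOf_eq, Set.mem_iInter]
  rw [this]
  exact isClosed_iInter fun a => isClosed_iInter fun n => window_set_closed aseq a n

lemma XS_compact : IsCompact (XS aseq) := (XS_closed aseq).isCompact

lemma int_emod_shift (a : ℤ) (l : ℤ) (i : ℤ) : (a + i) % l = (a % l + i) % l := by
  conv_lhs => rw [show a + i = (a % l + i) + l * (a / l) by
    have := Int.mul_ediv_add_emod a l
    ring_nf
    omega]
  rw [Int.add_mul_emod_self_left]


noncomputable def perpt (w : List Bool) : ℤ → Bool :=
  fun i => w.getD (i % (w.length:ℤ)).toNat false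


lemma perpt_wnd {w : List Bool} (hw : 1 ≤ w.length) (a : ℤ) (n : ℕ) (hn : n ≤ w.length) :
    wnd (perpt w) a n = ((w ++ w).drop ((a % (w.length:ℤ)).toNat)).take n := by
  have hl0 : (0:ℤ) < (w.length:ℤ) := by exact_mod_cast hw
  have hr0 : 0 ≤ a % (w.length:ℤ) := Int.emod_nonneg a (by omega)
  have hrl : a % (w.length:ℤ) < (w.length:ℤ) := Int.emod_lt_of_pos a hl0
  have hrl' : (a % (w.length:ℤ)).toNat < w.length := by omega
  apply List.ext_getElem
  · simp only [wnd, List.length_ofFn, List.length_take, List.length_drop, List.length_append]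
    omega
  intro i h1 h2
  simp only [wnd, List.length_ofFn] at h1
  rw [wnd_getElem _ _ _ _ h1]
  rw [List.getElem_take, List.getElem_drop]
  have hin : i < w.length := by omega
  have key : ((a + i) % (w.length:ℤ)).toNat =
      if (a % (w.length:ℤ)).toNat + i < w.length then (a % (w.length:ℤ)).toNat + i
      else (a % (w.length:ℤ)).toNat + i - w.length := by
    have h3 : (a + (i:ℤ)) % (w.length:ℤ) = (((a % (w.length:ℤ)).toNat : ℤ) + i) % (w.length:ℤ) := by
      rw [int_emod_shift]
      congr 2
      omega
    split
    · next hlt =>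
      rw [h3, Int.emod_eq_of_lt (by positivity) (by exact_mod_cast hlt)]
      omega
    · next hge =>
      push_neg at hge
      have h4 : (((a % (w.length:ℤ)).toNat:ℤ) + i) % (w.length:ℤ) =
          (((a % (w.length:ℤ)).toNat:ℤ) + i - w.length) % (w.length:ℤ) := by
        conv_lhs => rw [show ((a % (w.length:ℤ)).toNat:ℤ) + i =
          (((a % (w.length:ℤ)).toNat:ℤ) + i - w.length) + (w.length:ℤ) * 1 by ring]
        rw [Int.add_mul_emod_self_left]
      rw [h3, h4, Int.emod_eq_of_lt (by omega) (by push_cast; omega)]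
      omega
  show perpt w (a + i) = (w ++ w)[(a % (w.length:ℤ)).toNat + i]'(by
    simp only [List.length_append]; omega)
  rw [perpt]
  have hidx : ((a + i) % (w.length:ℤ)).toNat < w.length := by
    rw [key]
    split <;> omega
  rw [List.getD_eq_getElem _ _ (by omega : ((a + (i:ℤ)) % (w.length:ℤ)).toNat < w.length)]
  by_cases hc : (a % (w.length:ℤ)).toNat + i < w.length
  · rw [List.getElem_append_left (by omega : (a % (w.length:ℤ)).toNat + i < w.length)]
    congr 1
    rw [key, if_pos hc]
  · rw [List.getElem_append_right (by omega : w.length ≤ (a % (w.length:ℤ)).toNat + i)]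
    congr 1
    rw [key, if_neg hc]


lemma Cl_closed (n : ℕ) : IsClosed {x : ℤ → Bool | ∀ a : ℤ, wnd x a n ∈ LangS aseq} := by
  have : {x : ℤ → Bool | ∀ a : ℤ, wnd x a n ∈ LangS aseq} =
      ⋂ a : ℤ, {x : ℤ → Bool | wnd x a n ∈ LangS aseq} := by
    ext x
    simp [Set.mem_iInter]
  rw [this]
  exact isClosed_iInter fun a => window_set_closed aseq a n

lemma Cl_nonempty (n : ℕ) : {x : ℤ → Bool | ∀ a : ℤ, wnd x a n ∈ LangS aseq}.Nonempty := by
  obtain ⟨w, hw⟩ := W_nonempty aseq n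
  have hwlen : w.length = (seqD aseq n).l := W_length aseq hw
  have hwn : n ≤ w.length := by
    have := l_ge aseq n
    omega
  have hw1 : 1 ≤ w.length := by
    have := l_pos aseq n
    omega
  refine ⟨perpt w, fun a => ?_⟩
  rw [perpt_wnd hw1 a n hwn]
  obtain ⟨v, hv⟩ := W_nonempty aseq (n+1)
  have hpair : w ++ w <:+: v := (rel_seq aseq n v hv).2.1 w hw w hw
  have hinf : ((w ++ w).drop ((a % (w.length:ℤ)).toNat)).take n <:+: w ++ w :=
    ((List.take_prefix _ _).isInfix).trans ((List.drop_suffix _ _).isInfix)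
  exact ⟨n+1, v, hv, hinf.trans hpair⟩

lemma XS_nonempty : (XS aseq).Nonempty := by
  have hX : XS aseq = ⋂ n : ℕ, {x : ℤ → Bool | ∀ a : ℤ, wnd x a n ∈ LangS aseq} := by
    ext x
    simp only [XS, Set.mem_setOf_eq, Set.mem_iInter]
    exact ⟨fun h n a => h a n, fun h a n => h n a⟩
  rw [hX]
  apply IsCompact.nonempty_iInter_of_sequence_nonempty_isCompact_isClosed
  · -- antitone
    intro n x hx a
    have h1 := hx a
    have h2 : wnd x a n = (wnd x a (n+1)).take n := (wnd_take x a (n+1) n (by omega)).symm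
    rw [h2]
    exact LangS_infix_closed aseq ((List.take_prefix _ _).isInfix) h1
  · exact fun n => Cl_nonempty aseq n
  · exact (Cl_closed aseq 0).isCompact
  · exact fun n => Cl_closed aseq n

lemma aseq_not_mem (k : ℕ) : aseq k ∉ XS aseq := by
  intro h
  obtain ⟨v, hv, hinf⟩ := occBlock aseq h (k+1) 0
  exact (rel_seq aseq k v hv).2.2 hinf

lemma XS_subset_minimal {Λ' : Set (ℤ → Bool)} (hsub : Λ' ⊆ XS aseq) (hne : Λ'.Nonempty)
    (hcomp : IsCompact Λ') (hinv : shiftMap '' Λ' = Λ') : Λ' = XS aseq := by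
  apply Set.Subset.antisymm hsub
  obtain ⟨y, hy⟩ := hne
  have hyX : y ∈ XS aseq := hsub hy
  have hclosed : IsClosed Λ' := hcomp.isClosed
  intro x hx
  -- for each n, find a shift of y matching x on [-n, n]
  have key : ∀ n : ℕ, ∃ t : ℤ, ∀ j : ℤ, |j| ≤ n → shiftZ t y j = x j := by
    intro n
    have hu : wnd x (-(n:ℤ)) (2*n+1) ∈ LangS aseq := hx _ _
    have hlen : (wnd x (-(n:ℤ)) (2*n+1)).length ≤ (seqD aseq (2*n+1)).l := by
      rw [wnd_length]
      have := l_ge aseq (2*n+1)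
      omega
    obtain ⟨b, hb⟩ := occWindow aseq hyX hu hlen
    rw [wnd_length] at hb
    refine ⟨b + n, fun j hj => ?_⟩
    rw [abs_le] at hj
    have hidx : (j + n).toNat < 2*n+1 := by omega
    have hcoord : x (-(n:ℤ) + (j + n).toNat) = y (b + (j + n).toNat) := by
      have hgE := List.getElem_of_eq hb (by rw [wnd_length]; exact hidx)
      rw [wnd_getElem _ _ _ _ hidx] at hgE
      rw [wnd_getElem _ _ _ _ hidx] at hgE
      exact hgE
    have e1 : -(n:ℤ) + (j + n).toNat = j := by omega
    have e2 : b + ((j + n).toNat : ℤ) = j + (b + n) := by omega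
    rw [e1, e2] at hcoord
    exact hcoord.symm
  choose t ht using key
  have hz : ∀ n : ℕ, shiftZ (t n) y ∈ Λ' := fun n => invariant_shiftZ hinv hy (t n)
  have htend : Filter.Tendsto (fun n => shiftZ (t n) y) Filter.atTop (nhds x) := by
    rw [tendsto_pi_nhds]
    intro j
    apply Filter.Tendsto.congr' _ tendsto_const_nhds
    rw [Filter.EventuallyEq, Filter.eventually_atTop]
    exact ⟨j.natAbs, fun n hn => (ht n j (by rw [abs_le]; omega)).symm⟩
  exact hclosed.mem_of_tendsto htend (Filter.Eventually.of_forall hz)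

end ShiftProof

namespace ShiftProof
open Dynamics

def U0 : Set ((ℤ → Bool) × (ℤ → Bool)) := {p | p.1 0 = p.2 0}

lemma U0_mem : U0 ∈ uniformity (ℤ → Bool) := by
  have h : {p : Bool × Bool | p.1 = p.2} ∈ uniformity Bool := fun a ha => ha
  exact (Pi.uniformContinuous_proj (fun _ : ℤ => Bool) 0) h

variable (aseq : ℕ → ℤ → Bool)

lemma shift_iter_apply (j : ℕ) (x : ℤ → Bool) : shiftMap^[j] x 0 = x j := by
  rw [shiftMap_iterate]
  show x (0 + (j:ℤ)) = x j
  rw [zero_add]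

lemma netMaxcard_lower (k : ℕ) :
    ((2 ^ (seqD aseq k).m : ℕ) : ℕ∞) ≤
      netMaxcard shiftMap (XS aseq) U0 ((seqD aseq k).l) := by
  classical
  obtain ⟨x₀, hx₀⟩ := XS_nonempty aseq
  have hocc : ∀ w : {w // w ∈ (seqD aseq k).W}, ∃ b : ℤ, (w : List Bool) = wnd x₀ b (w : List Bool).length := by
    intro w
    exact occWindow aseq hx₀ ⟨k, w, w.2, List.infix_refl _⟩ (le_of_eq (W_length aseq w.2))
  choose pos hpos using hocc
  set F : {w // w ∈ (seqD aseq k).W} → (ℤ → Bool) := fun w => shiftZ (pos w) x₀ with hF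
  have hwnd : ∀ w : {w // w ∈ (seqD aseq k).W},
      wnd (F w) 0 ((seqD aseq k).l) = (w : List Bool) := by
    intro w
    rw [hF, wnd_shiftZ, zero_add, ← W_length aseq w.2]
    exact (hpos w).symm
  have hFinj : Function.Injective F := by
    intro w w' h
    apply Subtype.ext
    rw [← hwnd w, ← hwnd w', h]
  set s : Finset (ℤ → Bool) := Finset.image F Finset.univ with hs
  have hcard : s.card = (seqD aseq k).W.card := by
    rw [hs, Finset.card_image_of_injective _ hFinj, Finset.card_univ, Fintype.card_coe]
  have hnet : IsDynNetIn shiftMap (XS aseq) U0 ((seqD aseq k).l) (s : Set (ℤ → Bool)) := by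
    constructor
    · intro z hz
      simp only [hs, Finset.coe_image, Set.mem_image] at hz
      obtain ⟨w, _, rfl⟩ := hz
      exact shiftZ_mem_XS aseq hx₀ (pos w)
    · intro p hp q hq hpq
      simp only [hs, Finset.coe_image, Set.mem_image] at hp hq
      obtain ⟨w, _, rfl⟩ := hp
      obtain ⟨w', _, rfl⟩ := hq
      have hww' : w ≠ w' := fun h => hpq (by rw [h])
      apply Set.disjoint_left.2
      intro z hz1 hz2
      rw [Dynamics.mem_ball_dynEntourage] at hz1 hz2
      have hWlen : (w : List Bool).length = (seqD aseq k).l := W_length aseq w.2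
      have hWlen' : (w' : List Bool).length = (seqD aseq k).l := W_length aseq w'.2
      have hex : ∃ i, ∃ (h : i < (seqD aseq k).l),
          (w : List Bool)[i]'(by omega) ≠ (w' : List Bool)[i]'(by omega) := by
        by_contra hcon
        push_neg at hcon
        apply hww'
        apply Subtype.ext
        apply List.ext_getElem (by omega)
        intro i h1 h2
        exact hcon i (by omega)
      obtain ⟨i, hi, hne⟩ := hex
      apply hne
      have e1 : ((w : List Bool))[i]'(by omega) = F w i := by
        have h := List.getElem_of_eq (hwnd w).symm (i := i) (by omega)
        rw [wnd_getElem _ _ _ _ hi, zero_add] at h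
        exact h
      have e2 : ((w' : List Bool))[i]'(by omega) = F w' i := by
        have h := List.getElem_of_eq (hwnd w').symm (i := i) (by omega)
        rw [wnd_getElem _ _ _ _ hi, zero_add] at h
        exact h
      have hz1' : shiftMap^[i] (F w) 0 = shiftMap^[i] z 0 := hz1 i hi
      have hz2' : shiftMap^[i] (F w') 0 = shiftMap^[i] z 0 := hz2 i hi
      rw [shift_iter_apply, shift_iter_apply] at hz1' hz2'
      rw [e1, e2, hz1', hz2']
  have h1 : (s.card : ℕ∞) ≤ netMaxcard shiftMap (XS aseq) U0 ((seqD aseq k).l) :=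
    IsDynNetIn.card_le_netMaxcard hnet
  have h2 : 2 ^ (seqD aseq k).m ≤ s.card := by
    rw [hcard]
    exact (invD_seq aseq k).2.1
  exact le_trans (by exact_mod_cast Nat.cast_le.2 h2) h1

end ShiftProof

namespace ShiftProof
open Dynamics Filter
open scoped ENNReal

variable (aseq : ℕ → ℤ → Bool)

lemma entropy_lower_at (k : ℕ) :
    ((Real.log 2 / 3 : ℝ) : EReal) ≤
      ENNReal.log (netMaxcard shiftMap (XS aseq) U0 ((seqD aseq k).l)) /
        (((seqD aseq k).l : ℕ) : EReal) := by
  set m := (seqD aseq k).m with hm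
  set n := (seqD aseq k).l with hn
  have hmn : n ≤ 3 * m := by
    have := (invD_seq aseq k).2.2.1
    omega
  have hn1 : 1 ≤ n := l_pos aseq k
  have h1 : ((2:ℝ≥0∞) ^ m) ≤ ((netMaxcard shiftMap (XS aseq) U0 n : ℕ∞) : ℝ≥0∞) := by
    have h := netMaxcard_lower aseq k
    have h' := ENat.toENNReal_le.2 h
    rw [← hn, ← hm] at h'
    refine le_trans (le_of_eq ?_) h'
    push_cast
    rfl
  have h2 : ENNReal.log ((2:ℝ≥0∞) ^ m) ≤
      ENNReal.log ((netMaxcard shiftMap (XS aseq) U0 n : ℕ∞) : ℝ≥0∞) :=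
    ENNReal.log_monotone h1
  have hlog2 : ENNReal.log 2 = ((Real.log 2 : ℝ) : EReal) := by
    rw [show (2:ℝ≥0∞) = ENNReal.ofReal 2 by norm_num,
      ENNReal.log_ofReal_of_pos (by norm_num)]
  have h3 : ENNReal.log ((2:ℝ≥0∞) ^ m) = (((m : ℝ) * Real.log 2 : ℝ) : EReal) := by
    rw [ENNReal.log_pow, hlog2]
    rw [← EReal.coe_coe_eq_natCast, ← EReal.coe_mul]
  have h4 : (((m : ℝ) * Real.log 2 : ℝ) : EReal) / ((n : ℕ) : EReal) ≤
      ENNReal.log ((netMaxcard shiftMap (XS aseq) U0 n : ℕ∞) : ℝ≥0∞) / ((n : ℕ) : EReal) := by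
    apply EReal.div_le_div_right_of_nonneg _ (h3 ▸ h2)
    exact_mod_cast Nat.cast_nonneg n
  refine le_trans ?_ h4
  rw [← EReal.coe_coe_eq_natCast, ← EReal.coe_div, EReal.coe_le_coe_iff]
  rw [div_le_div_iff₀ (by norm_num) (by exact_mod_cast hn1)]
  have hlogpos : (0:ℝ) < Real.log 2 := Real.log_pos (by norm_num)
  have hcast : (n : ℝ) ≤ 3 * (m : ℝ) := by exact_mod_cast hmn
  nlinarith

lemma netEntropyEntourage_lower :
    ((Real.log 2 / 3 : ℝ) : EReal) ≤ netEntropyEntourage shiftMap (XS aseq) U0 := by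
  apply le_limsup_of_frequently_le _ (by isBoundedDefault)
  rw [Filter.frequently_atTop]
  intro N
  refine ⟨(seqD aseq N).l, ?_, ?_⟩
  · have := l_ge aseq N
    omega
  · exact entropy_lower_at aseq N

lemma XS_entropy_pos : 0 < netEntropy shiftMap (XS aseq) := by
  have h1 : ((Real.log 2 / 3 : ℝ) : EReal) ≤ netEntropy shiftMap (XS aseq) := by
    refine le_trans (netEntropyEntourage_lower aseq) ?_
    exact le_iSup₂ (f := fun U (_ : U ∈ uniformity (ℤ → Bool)) =>
      netEntropyEntourage shiftMap (XS aseq) U) U0 U0_mem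
  have hlogpos : (0:ℝ) < Real.log 2 / 3 := by
    have := Real.log_pos (by norm_num : (1:ℝ) < 2)
    linarith
  exact lt_of_lt_of_le (by exact_mod_cast hlogpos) h1

end ShiftProof

/-- For every countable subset `A` of the full shift on two symbols, there is a minimal set
for the shift with positive topological entropy which is disjoint from `A`. -/
theorem exists_minimal_set_of_shift_posEntropy_disjoint_of_countable
    (A : Set (ℤ → Bool)) (hA : A.Countable) :
    ∃ Λ : Set (ℤ → Bool), IsMinimalSet shiftMap Λ ∧
      0 < netEntropy shiftMap Λ ∧ Λ ∩ A = ∅ := by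
  obtain ⟨aseq, hcover⟩ : ∃ f : ℕ → (ℤ → Bool), A ⊆ Set.range f := by
    rcases Set.eq_empty_or_nonempty A with rfl | hne
    · exact ⟨fun _ _ => false, by simp⟩
    · obtain ⟨f, hf⟩ := Set.Countable.exists_eq_range hA hne
      exact ⟨f, hf.le⟩
  refine ⟨ShiftProof.XS aseq, ⟨ShiftProof.XS_nonempty aseq, ShiftProof.XS_compact aseq,
    ShiftProof.XS_inv aseq, fun Λ' hsub hne hcomp hinv =>
      ShiftProof.XS_subset_minimal aseq hsub hne hcomp hinv⟩,
    ShiftProof.XS_entropy_pos aseq, ?_⟩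
  apply Set.eq_empty_iff_forall_notMem.2
  rintro x ⟨hx, hxA⟩
  obtain ⟨k, rfl⟩ := hcover hxA
  exact ShiftProof.aseq_not_mem aseq k hx
end
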